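/- Under the hypotheses of the previous statement, there is t₀ > 0 such that for all λ ∈ U the set of critical points of φ_λ with |t| < t₀ is exactly {(0,x,ξ) : H(x,ξ) = λ}. Concretely: there is no sequence λ_n ∈ U and critical points (t_n, x_n, ξ_n) of φ_{λ_n} with t_n ≠ 0 and t_n → 0. -/

import Mathlib

open Set

/-- The `x`-gradient of a function on `ℝ^d`, as the vector of partial derivatives. -/
noncomputable def gradx {d : ℕ} (f : (Fin d → ℝ) → ℝ) (x : Fin d → ℝ) : Fin d → ℝ :=
  fun i => fderiv ℝ f x (Pi.single i 1)

/-- `(t,x,ξ)` is a critical point of `φ_λ(t,x,ξ) = x·ξ − φ(t,x,ξ) − λt`. -/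
def IsCriticalPt {d : ℕ} (φ : ℝ → (Fin d → ℝ) → (Fin d → ℝ) → ℝ) (lam : ℝ)
    (t : ℝ) (x ξ : Fin d → ℝ) : Prop :=
  deriv (fun s => (∑ i, x i * ξ i) - φ s x ξ - lam * s) t = 0 ∧
  (∀ i, fderiv ℝ (fun x' => (∑ j, x' j * ξ j) - φ t x' ξ - lam * t) x (Pi.single i 1) = 0) ∧
  (∀ i, fderiv ℝ (fun ξ' => (∑ j, x j * ξ' j) - φ t x ξ' - lam * t) ξ (Pi.single i 1) = 0)

namespace Stmt7Aux


variable {d : ℕ}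

noncomputable def dotCLM (ξ : Fin d → ℝ) : (Fin d → ℝ) →L[ℝ] ℝ :=
  ∑ j, ξ j • ContinuousLinearMap.proj j

lemma dotCLM_apply (ξ v : Fin d → ℝ) : dotCLM ξ v = ∑ j, v j * ξ j := by
  simp [dotCLM, mul_comm]

lemma dotCLM_single (ξ : Fin d → ℝ) (i : Fin d) : dotCLM ξ (Pi.single i 1) = ξ i := by
  rw [dotCLM_apply]; simp [Pi.single_apply]

lemma hasFDerivAt_dot (ξ x : Fin d → ℝ) :
    HasFDerivAt (fun x' : Fin d → ℝ => ∑ j, x' j * ξ j) (dotCLM ξ) x := by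
  have h : (fun x' : Fin d → ℝ => ∑ j, x' j * ξ j) = fun x' => dotCLM ξ x' := by
    funext x'; rw [dotCLM_apply]
  rw [h]; exact (dotCLM ξ).hasFDerivAt

lemma hasFDerivAt_dot' (x ξ : Fin d → ℝ) :
    HasFDerivAt (fun ξ' : Fin d → ℝ => ∑ j, x j * ξ' j) (dotCLM x) ξ := by
  have h : (fun ξ' : Fin d → ℝ => ∑ j, x j * ξ' j) = fun ξ' => ∑ j, ξ' j * x j := by
    funext ξ'; exact Finset.sum_congr rfl fun j _ => mul_comm _ _
  rw [h]; exact hasFDerivAt_dot x ξ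

abbrev EE (d : ℕ) := ℝ × (Fin d → ℝ) × (Fin d → ℝ)

noncomputable def Jx : (Fin d → ℝ) →L[ℝ] EE d :=
  (0 : (Fin d → ℝ) →L[ℝ] ℝ).prod ((ContinuousLinearMap.id ℝ _).prod 0)

noncomputable def Jxi : (Fin d → ℝ) →L[ℝ] EE d :=
  (0 : (Fin d → ℝ) →L[ℝ] ℝ).prod
    ((0 : (Fin d → ℝ) →L[ℝ] (Fin d → ℝ)).prod (ContinuousLinearMap.id ℝ _))

noncomputable def Jt : ℝ →L[ℝ] EE d := (ContinuousLinearMap.id ℝ ℝ).prod 0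

@[simp] lemma Jx_apply (v : Fin d → ℝ) : (Jx v : EE d) = (0, v, 0) := rfl
@[simp] lemma Jxi_apply (v : Fin d → ℝ) : (Jxi v : EE d) = (0, 0, v) := rfl
@[simp] lemma Jt_apply (r : ℝ) : (Jt r : EE d) = (r, 0, 0) := rfl

lemma hasFDerivAt_inclX (t : ℝ) (ξ : Fin d → ℝ) (x : Fin d → ℝ) :
    HasFDerivAt (fun x' : Fin d → ℝ => ((t, x', ξ) : EE d)) Jx x := by
  have h : (fun x' : Fin d → ℝ => ((t, x', ξ) : EE d)) = fun x' => Jx x' + (t, 0, ξ) := by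
    funext x'; simp [Prod.ext_iff]
  rw [h]; exact Jx.hasFDerivAt.add_const _

lemma hasFDerivAt_inclXi (t : ℝ) (x : Fin d → ℝ) (ξ : Fin d → ℝ) :
    HasFDerivAt (fun ξ' : Fin d → ℝ => ((t, x, ξ') : EE d)) Jxi ξ := by
  have h : (fun ξ' : Fin d → ℝ => ((t, x, ξ') : EE d)) = fun ξ' => Jxi ξ' + (t, x, 0) := by
    funext ξ'; simp [Prod.ext_iff]
  rw [h]; exact Jxi.hasFDerivAt.add_const _

lemma hasFDerivAt_inclT (x ξ : Fin d → ℝ) (t : ℝ) :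
    HasFDerivAt (fun s : ℝ => ((s, x, ξ) : EE d)) Jt t := by
  have h : (fun s : ℝ => ((s, x, ξ) : EE d)) = fun s => Jt s + (0, x, ξ) := by
    funext s; simp [Prod.ext_iff]
  rw [h]; exact Jt.hasFDerivAt.add_const _

lemma sliceX {Φ : EE d → ℝ} {D : EE d →L[ℝ] ℝ} {t : ℝ} {x ξ : Fin d → ℝ}
    (h : HasFDerivAt Φ D (t, x, ξ)) :
    HasFDerivAt (fun x' => Φ (t, x', ξ)) (D.comp Jx) x :=
  h.comp x (hasFDerivAt_inclX t ξ x)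

lemma sliceXi {Φ : EE d → ℝ} {D : EE d →L[ℝ] ℝ} {t : ℝ} {x ξ : Fin d → ℝ}
    (h : HasFDerivAt Φ D (t, x, ξ)) :
    HasFDerivAt (fun ξ' => Φ (t, x, ξ')) (D.comp Jxi) ξ :=
  h.comp ξ (hasFDerivAt_inclXi t x ξ)

lemma sliceT {Φ : EE d → ℝ} {D : EE d →L[ℝ] ℝ} {t : ℝ} {x ξ : Fin d → ℝ}
    (h : HasFDerivAt Φ D (t, x, ξ)) :
    HasDerivAt (fun s => Φ (s, x, ξ)) (D (1, 0, 0)) t := by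
  have := (h.comp t (hasFDerivAt_inclT x ξ t)).hasDerivAt
  simpa [Function.comp_def] using this

def Phi (φ : ℝ → (Fin d → ℝ) → (Fin d → ℝ) → ℝ) : EE d → ℝ := fun p => φ p.1 p.2.1 p.2.2

lemma omega_open (T : ℝ) :
    IsOpen (Ioo (-T) T ×ˢ (univ : Set ((Fin d → ℝ) × (Fin d → ℝ)))) :=
  isOpen_Ioo.prod isOpen_univ

lemma phi_hasFDerivAt {T : ℝ} {φ : ℝ → (Fin d → ℝ) → (Fin d → ℝ) → ℝ}
    (hφ : ContDiffOn ℝ (⊤ : ℕ∞) (Phi φ) (Ioo (-T) T ×ˢ univ)) {p : EE d} (hp : p.1 ∈ Ioo (-T) T) :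
    HasFDerivAt (Phi φ) (fderiv ℝ (Phi φ) p) p := by
  have hmem : p ∈ Ioo (-T) T ×ˢ (univ : Set ((Fin d → ℝ) × (Fin d → ℝ))) :=
    ⟨hp, mem_univ _⟩
  have := ((hφ.differentiableOn (by simp)).differentiableAt
    ((omega_open T).mem_nhds hmem))
  exact this.hasFDerivAt

variable {d : ℕ} {T : ℝ} {φ : ℝ → (Fin d → ℝ) → (Fin d → ℝ) → ℝ}
  {H : (Fin d → ℝ) → (Fin d → ℝ) → ℝ}

/-- characterization of criticality in terms of the full derivative of `Phi φ`. -/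
lemma crit_iff (hφ : ContDiffOn ℝ (⊤ : ℕ∞) (Phi φ) (Ioo (-T) T ×ˢ univ))
    {t : ℝ} {x ξ : Fin d → ℝ} {lam : ℝ} (ht : t ∈ Ioo (-T) T) :
    IsCriticalPt φ lam t x ξ ↔
      (fderiv ℝ (Phi φ) (t, x, ξ)) (1, 0, 0) = -lam ∧
      (∀ i, (fderiv ℝ (Phi φ) (t, x, ξ)) (0, Pi.single i 1, 0) = ξ i) ∧
      (∀ i, (fderiv ℝ (Phi φ) (t, x, ξ)) (0, 0, Pi.single i 1) = x i) := by
  set D := fderiv ℝ (Phi φ) (t, x, ξ) with hD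
  have hDp : HasFDerivAt (Phi φ) D (t, x, ξ) := phi_hasFDerivAt hφ ht
  have h1 : deriv (fun s => (∑ i, x i * ξ i) - φ s x ξ - lam * s) t
      = -(D (1, 0, 0)) - lam := by
    have hs : HasDerivAt (fun s => Phi φ (s, x, ξ)) (D (1, 0, 0)) t := sliceT hDp
    have hlam : HasDerivAt (fun s : ℝ => lam * s) lam t := by
      simpa using (hasDerivAt_id t).const_mul lam
    have := (((hasDerivAt_const t (∑ i, x i * ξ i)).sub hs).sub hlam).deriv
    rw [zero_sub] at this
    exact this
  have h2 : ∀ i, fderiv ℝ (fun x' => (∑ j, x' j * ξ j) - φ t x' ξ - lam * t) x (Pi.single i 1)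
      = ξ i - D (0, Pi.single i 1, 0) := by
    intro i
    have hs : HasFDerivAt (fun x' => Phi φ (t, x', ξ)) (D.comp Jx) x := sliceX hDp
    have := (((hasFDerivAt_dot ξ x).sub hs).sub_const (lam * t)).fderiv
    have h' : fderiv ℝ (fun x' => (∑ j, x' j * ξ j) - φ t x' ξ - lam * t) x
        = dotCLM ξ - D.comp Jx := by simpa [Phi] using this
    rw [h']
    simp [dotCLM_single]
  have h3 : ∀ i, fderiv ℝ (fun ξ' => (∑ j, x j * ξ' j) - φ t x ξ' - lam * t) ξ (Pi.single i 1)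
      = x i - D (0, 0, Pi.single i 1) := by
    intro i
    have hs : HasFDerivAt (fun ξ' => Phi φ (t, x, ξ')) (D.comp Jxi) ξ := sliceXi hDp
    have := (((hasFDerivAt_dot' x ξ).sub hs).sub_const (lam * t)).fderiv
    have h' : fderiv ℝ (fun ξ' => (∑ j, x j * ξ' j) - φ t x ξ' - lam * t) ξ
        = dotCLM x - D.comp Jxi := by simpa [Phi] using this
    rw [h']
    simp [dotCLM_single]
  constructor
  · rintro ⟨c1, c2, c3⟩
    refine ⟨?_, fun i => ?_, fun i => ?_⟩
    · have := c1; rw [h1] at this; linarith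
    · have := c2 i; rw [h2 i] at this; linarith
    · have := c3 i; rw [h3 i] at this; linarith
  · rintro ⟨c1, c2, c3⟩
    refine ⟨?_, fun i => ?_, fun i => ?_⟩
    · rw [h1, c1]; ring
    · rw [h2 i, c2 i]; ring
    · rw [h3 i, c3 i]; ring

/-- the Hamilton–Jacobi equation, in terms of the full derivative. -/
lemma HJ_fderiv (hφ : ContDiffOn ℝ (⊤ : ℕ∞) (Phi φ) (Ioo (-T) T ×ˢ univ))
    (hHJ : ∀ t ∈ Set.Ioo (-T) T, ∀ x ξ,
      deriv (fun s => φ s x ξ) t + H x (gradx (fun x' => φ t x' ξ) x) = 0)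
    {t : ℝ} {x ξ : Fin d → ℝ} (ht : t ∈ Ioo (-T) T) :
    (fderiv ℝ (Phi φ) (t, x, ξ)) (1, 0, 0)
      = - H x (fun i => (fderiv ℝ (Phi φ) (t, x, ξ)) (0, Pi.single i 1, 0)) := by
  set D := fderiv ℝ (Phi φ) (t, x, ξ) with hD
  have hDp : HasFDerivAt (Phi φ) D (t, x, ξ) := phi_hasFDerivAt hφ ht
  have e1 : deriv (fun s => φ s x ξ) t = D (1, 0, 0) := by
    have hs : HasDerivAt (fun s => Phi φ (s, x, ξ)) (D (1, 0, 0)) t := sliceT hDp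
    simpa [Phi] using hs.deriv
  have e2 : gradx (fun x' => φ t x' ξ) x = fun i => D (0, Pi.single i 1, 0) := by
    funext i
    have hs : HasFDerivAt (fun x' => Phi φ (t, x', ξ)) (D.comp Jx) x := sliceX hDp
    have : fderiv ℝ (fun x' => φ t x' ξ) x = D.comp Jx := by simpa [Phi] using hs.fderiv
    simp [gradx, this]
  have := hHJ t ht x ξ
  rw [e1, e2] at this
  linarith

/-- initial condition: the space derivatives at `t = 0`. -/
lemma init_fderiv (hT : 0 < T) (hφ : ContDiffOn ℝ (⊤ : ℕ∞) (Phi φ) (Ioo (-T) T ×ˢ univ))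
    (hinit : ∀ x ξ, φ 0 x ξ = ∑ i, x i * ξ i) (x ξ : Fin d → ℝ) :
    (∀ i, (fderiv ℝ (Phi φ) (0, x, ξ)) (0, Pi.single i 1, 0) = ξ i) ∧
    (∀ i, (fderiv ℝ (Phi φ) (0, x, ξ)) (0, 0, Pi.single i 1) = x i) := by
  have h0 : (0 : ℝ) ∈ Ioo (-T) T := by constructor <;> simp [hT] <;> linarith
  set D := fderiv ℝ (Phi φ) (0, x, ξ) with hD
  have hDp : HasFDerivAt (Phi φ) D (0, x, ξ) := phi_hasFDerivAt hφ h0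
  constructor
  · intro i
    have hs : HasFDerivAt (fun x' => Phi φ (0, x', ξ)) (D.comp Jx) x := sliceX hDp
    have heq : (fun x' => Phi φ (0, x', ξ)) = fun x' => ∑ j, x' j * ξ j := by
      funext x'; simp [Phi, hinit]
    rw [heq] at hs
    have := hs.unique (hasFDerivAt_dot ξ x)
    have happ := congrArg (fun (L : (Fin d → ℝ) →L[ℝ] ℝ) => L (Pi.single i 1)) this
    simpa [dotCLM_single] using happ
  · intro i
    have hs : HasFDerivAt (fun ξ' => Phi φ (0, x, ξ')) (D.comp Jxi) ξ := sliceXi hDp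
    have heq : (fun ξ' => Phi φ (0, x, ξ')) = fun ξ' => ∑ j, x j * ξ' j := by
      funext ξ'; simp [Phi, hinit]
    rw [heq] at hs
    have := hs.unique (hasFDerivAt_dot' x ξ)
    have happ := congrArg (fun (L : (Fin d → ℝ) →L[ℝ] ℝ) => L (Pi.single i 1)) this
    simpa [dotCLM_single] using happ

/-- a critical point in the strip has `H x ξ = lam`. -/
lemma crit_ham (hφ : ContDiffOn ℝ (⊤ : ℕ∞) (Phi φ) (Ioo (-T) T ×ˢ univ))
    (hHJ : ∀ t ∈ Set.Ioo (-T) T, ∀ x ξ,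
      deriv (fun s => φ s x ξ) t + H x (gradx (fun x' => φ t x' ξ) x) = 0)
    {t : ℝ} {x ξ : Fin d → ℝ} {lam : ℝ} (ht : t ∈ Ioo (-T) T)
    (hc : IsCriticalPt φ lam t x ξ) : H x ξ = lam := by
  rw [crit_iff hφ ht] at hc
  obtain ⟨c1, c2, c3⟩ := hc
  have := HJ_fderiv hφ hHJ (x := x) (ξ := ξ) ht
  rw [c1] at this
  have hgr : (fun i => (fderiv ℝ (Phi φ) (t, x, ξ)) (0, Pi.single i 1, 0)) = ξ := funext c2
  rw [hgr] at this
  linarith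

/-- `(0, x, ξ)` with `H x ξ = lam` is critical. -/
lemma crit_at_zero (hT : 0 < T) (hφ : ContDiffOn ℝ (⊤ : ℕ∞) (Phi φ) (Ioo (-T) T ×ˢ univ))
    (hHJ : ∀ t ∈ Set.Ioo (-T) T, ∀ x ξ,
      deriv (fun s => φ s x ξ) t + H x (gradx (fun x' => φ t x' ξ) x) = 0)
    (hinit : ∀ x ξ, φ 0 x ξ = ∑ i, x i * ξ i)
    {x ξ : Fin d → ℝ} {lam : ℝ} (hl : H x ξ = lam) : IsCriticalPt φ lam 0 x ξ := by
  have h0 : (0 : ℝ) ∈ Ioo (-T) T := by constructor <;> simp [hT] <;> linarith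
  rw [crit_iff hφ h0]
  obtain ⟨i1, i2⟩ := init_fderiv hT hφ hinit x ξ
  refine ⟨?_, i1, i2⟩
  have := HJ_fderiv hφ hHJ (x := x) (ξ := ξ) h0
  rw [this]
  have hgr : (fun i => (fderiv ℝ (Phi φ) (0, x, ξ)) (0, Pi.single i 1, 0)) = ξ := funext i1
  rw [hgr, hl]


abbrev PP (d : ℕ) := (Fin d → ℝ) × (Fin d → ℝ)

lemma single_smul_aux (v : Fin d → ℝ) (i : Fin d) :
    v i • (Pi.single i 1 : Fin d → ℝ) = Pi.single i (v i) := by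
  rw [← Pi.single_smul]; simp

lemma decomp_x (D : EE d →L[ℝ] ℝ) (v : Fin d → ℝ) :
    D (0, v, 0) = ∑ i, v i * D (0, Pi.single i 1, 0) := by
  have hv : ((0, v, 0) : EE d) = ∑ i, v i • ((0, Pi.single i 1, 0) : EE d) := by
    have h : ∀ i : Fin d, (v i • ((0, Pi.single i 1, 0) : EE d))
        = ((0, Pi.single i (v i), 0) : EE d) := fun i =>
      Prod.ext (by simp) (Prod.ext (single_smul_aux v i) (by simp))
    rw [Finset.sum_congr rfl fun i _ => h i]
    refine Prod.ext (by simp [Prod.fst_sum]) (Prod.ext ?_ (by simp [Prod.snd_sum]))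
    simp only [Prod.snd_sum, Prod.fst_sum]
    exact (Finset.univ_sum_single v).symm
  rw [hv, map_sum]
  exact Finset.sum_congr rfl fun i _ => by rw [map_smul]; simp

lemma decomp_p1 (L : PP d →L[ℝ] ℝ) (v : Fin d → ℝ) :
    L (v, 0) = ∑ i, v i * L (Pi.single i 1, 0) := by
  have hv : ((v, 0) : PP d) = ∑ i, v i • ((Pi.single i 1, 0) : PP d) := by
    have h : ∀ i : Fin d, (v i • ((Pi.single i 1, 0) : PP d))
        = ((Pi.single i (v i), 0) : PP d) := fun i =>
      Prod.ext (single_smul_aux v i) (by simp)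
    rw [Finset.sum_congr rfl fun i _ => h i]
    refine Prod.ext ?_ (by simp [Prod.snd_sum])
    simp only [Prod.fst_sum]
    exact (Finset.univ_sum_single v).symm
  rw [hv, map_sum]
  exact Finset.sum_congr rfl fun i _ => by rw [map_smul]; simp

lemma decomp_p2 (L : PP d →L[ℝ] ℝ) (v : Fin d → ℝ) :
    L (0, v) = ∑ i, v i * L (0, Pi.single i 1) := by
  have hv : ((0, v) : PP d) = ∑ i, v i • ((0, Pi.single i 1) : PP d) := by
    have h : ∀ i : Fin d, (v i • ((0, Pi.single i 1) : PP d))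
        = ((0, Pi.single i (v i)) : PP d) := fun i =>
      Prod.ext (by simp) (single_smul_aux v i)
    rw [Finset.sum_congr rfl fun i _ => h i]
    refine Prod.ext (by simp [Prod.fst_sum]) ?_
    simp only [Prod.snd_sum]
    exact (Finset.univ_sum_single v).symm
  rw [hv, map_sum]
  exact Finset.sum_congr rfl fun i _ => by rw [map_smul]; simp

lemma fderiv_Hp_shift (hH : ContDiff ℝ (⊤ : ℕ∞) fun p : PP d => H p.1 p.2)
    (hper : ∀ x ξ (γ : Fin d → ℤ), H x (ξ + fun i => 2 * Real.pi * γ i) = H x ξ)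
    (γ : Fin d → ℤ) (p : PP d) :
    fderiv ℝ (fun p : PP d => H p.1 p.2) (p + (0, fun i => 2 * Real.pi * γ i))
      = fderiv ℝ (fun p : PP d => H p.1 p.2) p := by
  set Hp : PP d → ℝ := fun p => H p.1 p.2 with hHp
  set c : PP d := (0, fun i => 2 * Real.pi * γ i) with hc
  have hcomp : (fun q : PP d => Hp (q + c)) = Hp := by
    funext q
    show H (q + c).1 (q + c).2 = H q.1 q.2
    have h1 : (q + c).1 = q.1 := by simp [hc]
    have h2 : (q + c).2 = q.2 + fun i => 2 * Real.pi * γ i := by simp [hc]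
    rw [h1, h2, hper]
  have hdiff := hH.differentiable (by simp)
  have h1 : HasFDerivAt (fun q : PP d => Hp (q + c)) (fderiv ℝ Hp (p + c)) p := by
    have := ((hdiff (p + c)).hasFDerivAt).comp p ((hasFDerivAt_id p).add_const c)
    simpa [Function.comp_def] using this
  rw [hcomp] at h1
  exact ((hdiff p).hasFDerivAt.unique h1).symm

lemma Hp_deriv_bound (hH : ContDiff ℝ (⊤ : ℕ∞) fun p : PP d => H p.1 p.2)
    (hper : ∀ x ξ (γ : Fin d → ℤ), H x (ξ + fun i => 2 * Real.pi * γ i) = H x ξ)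
    (r : ℝ) :
    ∃ C, 0 < C ∧ ∀ (y q : Fin d → ℝ), ‖y‖ ≤ r →
      ‖fderiv ℝ (fun p : PP d => H p.1 p.2) (y, q)‖ ≤ C := by
  set Hp : PP d → ℝ := fun p => H p.1 p.2 with hHp
  have hK : IsCompact ((Metric.closedBall (0 : Fin d → ℝ) r) ×ˢ (Metric.closedBall (0 : Fin d → ℝ) (2 * Real.pi))) :=
    (isCompact_closedBall _ _).prod (isCompact_closedBall _ _)
  obtain ⟨C0, hC0⟩ := hK.exists_bound_of_continuousOn
    ((hH.continuous_fderiv (by simp)).continuousOn)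
  refine ⟨max C0 1, lt_of_lt_of_le one_pos (le_max_right _ _), fun y q hy => ?_⟩
  set γ : Fin d → ℤ := fun i => ⌊q i / (2 * Real.pi)⌋ with hγ
  set q' : Fin d → ℝ := fun i => 2 * Real.pi * Int.fract (q i / (2 * Real.pi)) with hq'
  have h2pi : (0:ℝ) < 2 * Real.pi := Real.two_pi_pos
  have hq : q = q' + fun i => 2 * Real.pi * γ i := by
    funext i
    have := Int.fract_add_floor (q i / (2 * Real.pi))
    show q i = 2 * Real.pi * Int.fract (q i / (2 * Real.pi)) + 2 * Real.pi * (⌊q i / (2 * Real.pi)⌋ : ℝ)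
    have h : Int.fract (q i / (2 * Real.pi)) + (⌊q i / (2 * Real.pi)⌋ : ℝ) = q i / (2 * Real.pi) :=
      Int.fract_add_floor _
    have h2 : 2 * Real.pi * (Int.fract (q i / (2 * Real.pi)) + (⌊q i / (2 * Real.pi)⌋ : ℝ))
        = 2 * Real.pi * (q i / (2 * Real.pi)) := by rw [h]
    have h3 : 2 * Real.pi * (q i / (2 * Real.pi)) = q i := by
      field_simp
    rw [h3] at h2
    linarith [h2, mul_add (2 * Real.pi) (Int.fract (q i / (2 * Real.pi))) ((⌊q i / (2 * Real.pi)⌋ : ℝ))]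
  have hyq : ((y, q) : PP d) = (y, q') + (0, fun i => 2 * Real.pi * γ i) := by
    refine Prod.ext (by simp) ?_
    show q = q' + fun i => 2 * Real.pi * γ i
    exact hq
  rw [hyq, fderiv_Hp_shift hH hper γ (y, q')]
  refine le_trans (hC0 _ ⟨?_, ?_⟩) (le_max_left _ _)
  · exact mem_closedBall_zero_iff.2 hy
  · rw [mem_closedBall_zero_iff]
    refine (pi_norm_le_iff_of_nonneg h2pi.le).2 fun i => ?_
    have h0 : (0:ℝ) ≤ Int.fract (q i / (2 * Real.pi)) := Int.fract_nonneg _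
    have h1 : Int.fract (q i / (2 * Real.pi)) < 1 := Int.fract_lt_one _
    have habs : ‖q' i‖ = 2 * Real.pi * Int.fract (q i / (2 * Real.pi)) := by
      rw [hq', Real.norm_eq_abs]; exact abs_of_nonneg (mul_nonneg h2pi.le h0)
    rw [habs]
    nlinarith

/-- the spatial gradient field of `Phi φ`. -/
noncomputable def Gr (φ : ℝ → (Fin d → ℝ) → (Fin d → ℝ) → ℝ) : EE d → (Fin d → ℝ) :=
  fun p j => fderiv ℝ (Phi φ) p (0, Pi.single j 1, 0)

/-- directional derivative field of `Phi φ`. -/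
noncomputable def Uv (φ : ℝ → (Fin d → ℝ) → (Fin d → ℝ) → ℝ) (w : EE d) : EE d → ℝ :=
  fun p => fderiv ℝ (Phi φ) p w

lemma fderiv_phi_contDiffOn (hφ : ContDiffOn ℝ (⊤ : ℕ∞) (Phi φ) (Ioo (-T) T ×ˢ univ)) (m : ℕ) :
    ContDiffOn ℝ m (fun p => fderiv ℝ (Phi φ) p) (Ioo (-T) T ×ˢ univ) :=
  hφ.fderiv_of_isOpen (omega_open T) (by exact_mod_cast le_top)

lemma Uv_contDiffOn (hφ : ContDiffOn ℝ (⊤ : ℕ∞) (Phi φ) (Ioo (-T) T ×ˢ univ)) (w : EE d) (m : ℕ) :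
    ContDiffOn ℝ m (Uv φ w) (Ioo (-T) T ×ˢ univ) :=
  (fderiv_phi_contDiffOn hφ m).clm_apply contDiffOn_const

lemma Gr_contDiffOn (hφ : ContDiffOn ℝ (⊤ : ℕ∞) (Phi φ) (Ioo (-T) T ×ˢ univ)) (m : ℕ) :
    ContDiffOn ℝ m (Gr φ) (Ioo (-T) T ×ˢ univ) :=
  contDiffOn_pi.2 fun j => Uv_contDiffOn hφ _ m

lemma Gr_zero (hT : 0 < T) (hφ : ContDiffOn ℝ (⊤ : ℕ∞) (Phi φ) (Ioo (-T) T ×ˢ univ))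
    (hinit : ∀ x ξ, φ 0 x ξ = ∑ i, x i * ξ i) (x ξ : Fin d → ℝ) :
    Gr φ (0, x, ξ) = ξ :=
  funext fun j => (init_fderiv hT hφ hinit x ξ).1 j

lemma HJ_Gr (hφ : ContDiffOn ℝ (⊤ : ℕ∞) (Phi φ) (Ioo (-T) T ×ˢ univ))
    (hHJ : ∀ t ∈ Set.Ioo (-T) T, ∀ x ξ,
      deriv (fun s => φ s x ξ) t + H x (gradx (fun x' => φ t x' ξ) x) = 0)
    {t : ℝ} (ht : t ∈ Ioo (-T) T) (x ξ : Fin d → ℝ) :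
    (fderiv ℝ (Phi φ) (t, x, ξ)) (1, 0, 0) = - H x (Gr φ (t, x, ξ)) := by
  have := HJ_fderiv hφ hHJ (x := x) (ξ := ξ) ht
  rw [this]; rfl

/-- fundamental theorem of calculus for the mean-value vector field. -/
lemma ftc_sum (hH : ContDiff ℝ (⊤ : ℕ∞) fun p : PP d => H p.1 p.2) (y G B : Fin d → ℝ) :
    ∑ i, (∫ θ in (0:ℝ)..1,
        (fderiv ℝ (fun p : PP d => H p.1 p.2) (y, G + θ • B)) (0, Pi.single i 1)) * B i
      = H y (G + B) - H y G := by
  set Hp : PP d → ℝ := fun p => H p.1 p.2 with hHp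
  have hcont : Continuous fun θ : ℝ => fderiv ℝ Hp (y, G + θ • B) :=
    (hH.continuous_fderiv (by simp)).comp
      (continuous_const.prodMk (continuous_const.add (continuous_id.smul continuous_const)))
  have hinner : ∀ θ : ℝ, HasDerivAt (fun θ : ℝ => ((y, G + θ • B) : PP d)) (0, B) θ := by
    intro θ
    have h1 : HasDerivAt (fun θ : ℝ => G + θ • B) B θ := by
      simpa using ((hasDerivAt_id θ).smul_const B).const_add G
    simpa using (hasDerivAt_const θ y).prodMk h1
  have hk : ∀ θ ∈ uIcc (0:ℝ) 1, HasDerivAt (fun θ => Hp (y, G + θ • B))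
      ((fderiv ℝ Hp (y, G + θ • B)) (0, B)) θ := by
    intro θ _
    exact ((hH.differentiable (by simp) _).hasFDerivAt).comp_hasDerivAt θ (hinner θ)
  have hcont2 : Continuous fun θ : ℝ => (fderiv ℝ Hp (y, G + θ • B)) (0, B) :=
    ((ContinuousLinearMap.apply ℝ ℝ ((0, B) : PP d)).continuous).comp hcont
  have h1 : (∫ θ in (0:ℝ)..1, (fderiv ℝ Hp (y, G + θ • B)) (0, B))
      = Hp (y, G + B) - Hp (y, G) := by
    have := intervalIntegral.integral_eq_sub_of_hasDerivAt hk
      (hcont2.intervalIntegrable 0 1)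
    simpa using this
  have h2 : ∀ θ : ℝ, (fderiv ℝ Hp (y, G + θ • B)) (0, B)
      = ∑ i, ((fderiv ℝ Hp (y, G + θ • B)) (0, Pi.single i 1)) * B i := by
    intro θ
    rw [decomp_p2]
    exact Finset.sum_congr rfl fun i _ => mul_comm _ _
  have h3 : (∫ θ in (0:ℝ)..1, (fderiv ℝ Hp (y, G + θ • B)) (0, B))
      = ∑ i, ∫ θ in (0:ℝ)..1, ((fderiv ℝ Hp (y, G + θ • B)) (0, Pi.single i 1)) * B i := by
    rw [← intervalIntegral.integral_finset_sum]
    · exact intervalIntegral.integral_congr fun θ _ => h2 θ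
    · intro i _
      exact ((((ContinuousLinearMap.apply ℝ ℝ ((0, Pi.single i 1) : PP d)).continuous).comp
        hcont).mul continuous_const).intervalIntegrable 0 1
  have h4 : ∀ i, (∫ θ in (0:ℝ)..1,
        ((fderiv ℝ Hp (y, G + θ • B)) (0, Pi.single i 1)) * B i)
      = (∫ θ in (0:ℝ)..1, (fderiv ℝ Hp (y, G + θ • B)) (0, Pi.single i 1)) * B i := by
    intro i
    exact intervalIntegral.integral_mul_const _ _
  calc ∑ i, (∫ θ in (0:ℝ)..1,
        (fderiv ℝ Hp (y, G + θ • B)) (0, Pi.single i 1)) * B i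
      = ∑ i, ∫ θ in (0:ℝ)..1,
        ((fderiv ℝ Hp (y, G + θ • B)) (0, Pi.single i 1)) * B i := by
        exact Finset.sum_congr rfl fun i _ => (h4 i).symm
    _ = Hp (y, G + B) - Hp (y, G) := by rw [← h3, h1]

lemma psi_zero_at_zero (hinit : ∀ x ξ, φ 0 x ξ = ∑ i, x i * ξ i)
    (y ξ : Fin d → ℝ) (γ : Fin d → ℤ) :
    Phi φ (0, y, ξ + fun i => 2 * Real.pi * γ i)
      = Phi φ (0, y, ξ) + 2 * Real.pi * ∑ i, y i * γ i := by
  show φ 0 y (ξ + fun i => 2 * Real.pi * γ i) = φ 0 y ξ + 2 * Real.pi * ∑ i, y i * γ i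
  rw [hinit, hinit]
  have h : ∀ i : Fin d, y i * ((ξ + fun i => 2 * Real.pi * (γ i : ℝ)) i)
      = y i * ξ i + 2 * Real.pi * (y i * (γ i : ℝ)) := by
    intro i; simp only [Pi.add_apply]; ring
  rw [Finset.sum_congr rfl fun i _ => h i, Finset.sum_add_distrib, Finset.mul_sum]

/-- joint Lipschitz bound for the mean-value integrand. -/
lemma Fi_lip (hH : ContDiff ℝ (⊤ : ℕ∞) fun p : PP d => H p.1 p.2)
    (hφ : ContDiffOn ℝ (⊤ : ℕ∞) (Phi φ) (Ioo (-T) T ×ˢ univ))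
    (i : Fin d) (ξ₁ ξ₂ c : Fin d → ℝ) (a r : ℝ) (haT : a < T) :
    ∃ L : ℝ, 0 ≤ L ∧ ∀ θ ∈ Icc (0:ℝ) 1, ∀ (s s' : ℝ) (y y' : Fin d → ℝ),
      s ∈ Icc (-a) a → s' ∈ Icc (-a) a →
      y ∈ Metric.closedBall (0 : Fin d → ℝ) r → y' ∈ Metric.closedBall (0 : Fin d → ℝ) r →
      |(fderiv ℝ (fun p : PP d => H p.1 p.2)
          (y, Gr φ (s, y, ξ₁) + θ • (Gr φ (s, y, ξ₂) - Gr φ (s, y, ξ₁) - c))) (0, Pi.single i 1)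
        - (fderiv ℝ (fun p : PP d => H p.1 p.2)
          (y', Gr φ (s', y', ξ₁) + θ • (Gr φ (s', y', ξ₂) - Gr φ (s', y', ξ₁) - c)))
            (0, Pi.single i 1)|
        ≤ L * ‖((s, y) : ℝ × (Fin d → ℝ)) - (s', y')‖ := by
  classical
  set Hp : PP d → ℝ := fun p => H p.1 p.2 with hHp
  set DD : Set (ℝ × (ℝ × (Fin d → ℝ))) :=
    (univ : Set ℝ) ×ˢ (Ioo (-T) T ×ˢ (univ : Set (Fin d → ℝ))) with hDD
  have hDopen : IsOpen DD := isOpen_univ.prod (isOpen_Ioo.prod isOpen_univ)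
  -- the full integrand as a function of (θ, (s, y))
  set F : ℝ × (ℝ × (Fin d → ℝ)) → ℝ := fun z =>
    (fderiv ℝ Hp (z.2.2, Gr φ (z.2.1, z.2.2, ξ₁)
      + z.1 • (Gr φ (z.2.1, z.2.2, ξ₂) - Gr φ (z.2.1, z.2.2, ξ₁) - c))) (0, Pi.single i 1)
    with hF
  -- smoothness of F on DD
  have hemb : ∀ ζ : Fin d → ℝ, ContDiff ℝ 1 (fun z : ℝ × (ℝ × (Fin d → ℝ)) =>
      ((z.2.1, z.2.2, ζ) : EE d)) := fun ζ =>
    (contDiff_fst.comp contDiff_snd).prodMk ((contDiff_snd.comp contDiff_snd).prodMk contDiff_const)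
  have hmaps : ∀ ζ : Fin d → ℝ, MapsTo (fun z : ℝ × (ℝ × (Fin d → ℝ)) =>
      ((z.2.1, z.2.2, ζ) : EE d)) DD (Ioo (-T) T ×ˢ univ) := by
    intro ζ z hz
    exact ⟨hz.2.1, mem_univ _⟩
  have hg : ∀ ζ : Fin d → ℝ, ContDiffOn ℝ 1 (fun z : ℝ × (ℝ × (Fin d → ℝ)) =>
      Gr φ (z.2.1, z.2.2, ζ)) DD := fun ζ =>
    (Gr_contDiffOn hφ 1).comp ((hemb ζ).contDiffOn) (hmaps ζ)
  have hB : ContDiffOn ℝ 1 (fun z : ℝ × (ℝ × (Fin d → ℝ)) =>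
      Gr φ (z.2.1, z.2.2, ξ₂) - Gr φ (z.2.1, z.2.2, ξ₁) - c) DD :=
    ((hg ξ₂).sub (hg ξ₁)).sub contDiffOn_const
  have hm : ContDiffOn ℝ 1 (fun z : ℝ × (ℝ × (Fin d → ℝ)) =>
      ((z.2.2, Gr φ (z.2.1, z.2.2, ξ₁)
        + z.1 • (Gr φ (z.2.1, z.2.2, ξ₂) - Gr φ (z.2.1, z.2.2, ξ₁) - c)) : PP d)) DD :=
    ((contDiff_snd.comp contDiff_snd).contDiffOn).prodMk
      ((hg ξ₁).add ((contDiff_fst.contDiffOn).smul hB))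
  have hFc : ContDiffOn ℝ 1 F DD :=
    (((hH.fderiv_right (m := 1) (WithTop.coe_le_coe.2 le_top)).comp_contDiffOn hm)).clm_apply contDiffOn_const
  -- bound of ‖fderiv F‖ on the compact set
  set Q : Set (ℝ × (ℝ × (Fin d → ℝ))) :=
    Icc (0:ℝ) 1 ×ˢ (Icc (-a) a ×ˢ Metric.closedBall (0 : Fin d → ℝ) r) with hQ
  have hQc : IsCompact Q :=
    isCompact_Icc.prod (isCompact_Icc.prod (isCompact_closedBall _ _))
  have hQsub : Q ⊆ DD := by
    rintro z ⟨hz1, hz2, hz3⟩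
    refine ⟨mem_univ _, ?_, mem_univ _⟩
    exact ⟨lt_of_lt_of_le (neg_lt_neg haT) hz2.1, lt_of_le_of_lt hz2.2 haT⟩
  obtain ⟨L0, hL0⟩ := hQc.exists_bound_of_continuousOn
    ((hFc.continuousOn_fderiv_of_isOpen hDopen (le_refl 1)).mono hQsub)
  refine ⟨max L0 0, le_max_right _ _, fun θ hθ s s' y y' hs hs' hy hy' => ?_⟩
  -- mean value inequality on the slice q ↦ F (θ, q), over the convex set S
  set S : Set (ℝ × (Fin d → ℝ)) := Icc (-a) a ×ˢ Metric.closedBall (0 : Fin d → ℝ) r with hS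
  have hSconv : Convex ℝ S := (convex_Icc _ _).prod (convex_closedBall _ _)
  set K2 : (ℝ × (Fin d → ℝ)) →L[ℝ] ℝ × (ℝ × (Fin d → ℝ)) :=
    ContinuousLinearMap.inr ℝ ℝ (ℝ × (Fin d → ℝ)) with hK2
  have hK2norm : ‖K2‖ ≤ 1 := by
    refine ContinuousLinearMap.opNorm_le_bound _ zero_le_one fun u => ?_
    have : ‖K2 u‖ = ‖((0 : ℝ), u)‖ := rfl
    rw [this, Prod.norm_def]
    simp
  have hder : ∀ q ∈ S, HasFDerivWithinAt (fun q : ℝ × (Fin d → ℝ) => F (θ, q))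
      ((fderiv ℝ F (θ, q)).comp K2) S q := by
    intro q hq
    have hmemD : (θ, q) ∈ DD := hQsub ⟨hθ, hq⟩
    have hFd : HasFDerivAt F (fderiv ℝ F (θ, q)) (θ, q) :=
      (((hFc.differentiableOn one_ne_zero).differentiableAt
        (hDopen.mem_nhds hmemD))).hasFDerivAt
    have hincl : HasFDerivAt (fun q : ℝ × (Fin d → ℝ) => ((θ, q) : ℝ × (ℝ × (Fin d → ℝ)))) K2 q := by
      have h : (fun q : ℝ × (Fin d → ℝ) => ((θ, q) : ℝ × (ℝ × (Fin d → ℝ))))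
          = fun q => K2 q + (θ, 0) := by
        funext q; simp [hK2, Prod.ext_iff]
      rw [h]; exact K2.hasFDerivAt.add_const _
    exact (hFd.comp q hincl).hasFDerivWithinAt
  have hbound : ∀ q ∈ S, ‖(fderiv ℝ F (θ, q)).comp K2‖ ≤ max L0 0 := by
    intro q hq
    refine le_trans (ContinuousLinearMap.opNorm_comp_le _ _) ?_
    have h1 : ‖fderiv ℝ F (θ, q)‖ ≤ L0 := hL0 _ ⟨hθ, hq⟩
    calc ‖fderiv ℝ F (θ, q)‖ * ‖K2‖ ≤ L0 * 1 :=
          mul_le_mul h1 hK2norm (norm_nonneg _) (le_trans (norm_nonneg _) h1)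
      _ = L0 := mul_one _
      _ ≤ max L0 0 := le_max_left _ _
  have hyS : ((s, y) : ℝ × (Fin d → ℝ)) ∈ S := ⟨hs, hy⟩
  have hy'S : ((s', y') : ℝ × (Fin d → ℝ)) ∈ S := ⟨hs', hy'⟩
  have := hSconv.norm_image_sub_le_of_norm_hasFDerivWithin_le hder hbound hy'S hyS
  simpa [hF, Real.norm_eq_abs] using this

noncomputable def KK : (ℝ × (Fin d → ℝ)) →L[ℝ] EE d :=
  (ContinuousLinearMap.fst ℝ ℝ (Fin d → ℝ)).prod
    ((ContinuousLinearMap.snd ℝ ℝ (Fin d → ℝ)).prod 0)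

@[simp] lemma KK_apply (q : ℝ × (Fin d → ℝ)) : (KK q : EE d) = (q.1, q.2, 0) := rfl

/-- Main uniqueness/periodicity lemma: `φ(t,x,ξ+2πγ) = φ(t,x,ξ) + 2π x·γ` for small `t`
and bounded `x`. -/
lemma phi_periodic (hH : ContDiff ℝ (⊤ : ℕ∞) fun p : PP d => H p.1 p.2)
    (hper : ∀ x ξ (γ : Fin d → ℤ), H x (ξ + fun i => 2 * Real.pi * γ i) = H x ξ)
    (hT : 0 < T)
    (hφ : ContDiffOn ℝ (⊤ : ℕ∞) (Phi φ) (Ioo (-T) T ×ˢ univ))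
    (hHJ : ∀ t ∈ Set.Ioo (-T) T, ∀ x ξ,
      deriv (fun s => φ s x ξ) t + H x (gradx (fun x' => φ t x' ξ) x) = 0)
    (hinit : ∀ x ξ, φ 0 x ξ = ∑ i, x i * ξ i)
    (R : ℝ) (hR : 0 < R) :
    ∃ t₁, 0 < t₁ ∧ t₁ ≤ T / 2 ∧ ∀ (ξ : Fin d → ℝ) (γ : Fin d → ℤ) (t : ℝ) (x : Fin d → ℝ),
      |t| ≤ t₁ → ‖x‖ < R →
      Phi φ (t, x, ξ + fun i => 2 * Real.pi * γ i)
        = Phi φ (t, x, ξ) + 2 * Real.pi * ∑ i, x i * γ i := by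
  classical
  set Hp : PP d → ℝ := fun p => H p.1 p.2 with hHpdef
  obtain ⟨C, hCpos, hC⟩ := Hp_deriv_bound hH hper (R + 1)
  refine ⟨min (T / 2) (1 / C), lt_min (by linarith) (by positivity), min_le_left _ _,
    fun ξ γ t x ht hx => ?_⟩
  set t₁ := min (T / 2) (1 / C) with ht₁def
  set cg : Fin d → ℝ := fun i => 2 * Real.pi * γ i with hcg
  set ξ₂ : Fin d → ℝ := ξ + cg with hξ₂
  set ψ : ℝ × (Fin d → ℝ) → ℝ := fun q =>
    Phi φ (q.1, q.2, ξ₂) - Phi φ (q.1, q.2, ξ) - 2 * Real.pi * ∑ i, q.2 i * γ i with hψdef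
  suffices hψ0 : ψ (t, x) = 0 by
    have : Phi φ (t, x, ξ₂) - Phi φ (t, x, ξ) - 2 * Real.pi * ∑ i, x i * γ i = 0 := hψ0
    show Phi φ (t, x, ξ + fun i => 2 * Real.pi * γ i) = _
    rw [show (ξ + fun i => 2 * Real.pi * (γ i : ℝ)) = ξ₂ from rfl]
    linarith
  have hψzero : ∀ z : Fin d → ℝ, ψ (0, z) = 0 := by
    intro z
    have := psi_zero_at_zero (φ := φ) hinit z ξ γ
    show Phi φ (0, z, ξ₂) - Phi φ (0, z, ξ) - 2 * Real.pi * ∑ i, z i * γ i = 0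
    rw [show (ξ₂ : Fin d → ℝ) = ξ + fun i => 2 * Real.pi * (γ i : ℝ) from rfl, this]
    ring
  -- the mean value vector field
  set b : ℝ → (Fin d → ℝ) → (Fin d → ℝ) := fun s y i =>
    ∫ θ in (0:ℝ)..1, (fderiv ℝ Hp
      (y, Gr φ (s, y, ξ) + θ • (Gr φ (s, y, ξ₂) - Gr φ (s, y, ξ) - cg)))
        ((0, Pi.single i 1) : PP d) with hbdef
  have hFcont : ∀ (s : ℝ) (y : Fin d → ℝ) (i : Fin d), Continuous (fun θ : ℝ =>
      (fderiv ℝ Hp (y, Gr φ (s, y, ξ) + θ • (Gr φ (s, y, ξ₂) - Gr φ (s, y, ξ) - cg)))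
        ((0, Pi.single i 1) : PP d)) := by
    intro s y i
    exact (ContinuousLinearMap.apply ℝ ℝ ((0, Pi.single i 1) : PP d)).continuous.comp
      ((hH.continuous_fderiv (by simp)).comp
        (continuous_const.prodMk (continuous_const.add (continuous_id.smul continuous_const))))
  -- Lipschitz bounds
  have hLex : ∀ i : Fin d, ∃ L : ℝ, 0 ≤ L ∧ ∀ θ ∈ Icc (0:ℝ) 1, ∀ (s s' : ℝ) (y y' : Fin d → ℝ),
      s ∈ Icc (-(T/2)) (T/2) → s' ∈ Icc (-(T/2)) (T/2) →
      y ∈ Metric.closedBall (0 : Fin d → ℝ) (R+1) → y' ∈ Metric.closedBall (0 : Fin d → ℝ) (R+1) →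
      |(fderiv ℝ Hp
          (y, Gr φ (s, y, ξ) + θ • (Gr φ (s, y, ξ₂) - Gr φ (s, y, ξ) - cg))) (0, Pi.single i 1)
        - (fderiv ℝ Hp
          (y', Gr φ (s', y', ξ) + θ • (Gr φ (s', y', ξ₂) - Gr φ (s', y', ξ) - cg)))
            (0, Pi.single i 1)|
        ≤ L * ‖((s, y) : ℝ × (Fin d → ℝ)) - (s', y')‖ :=
    fun i => Fi_lip hH hφ i ξ ξ₂ cg (T/2) (R+1) (by linarith)
  choose L hLnn hLest using hLex
  set sumL : ℝ := ∑ i, L i with hsumL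
  have hsumLnn : 0 ≤ sumL := Finset.sum_nonneg fun i _ => hLnn i
  -- the joint estimate for b
  have hb_diff : ∀ (s s' : ℝ) (y y' : Fin d → ℝ),
      s ∈ Icc (-(T/2)) (T/2) → s' ∈ Icc (-(T/2)) (T/2) →
      y ∈ Metric.closedBall (0 : Fin d → ℝ) (R+1) →
      y' ∈ Metric.closedBall (0 : Fin d → ℝ) (R+1) →
      ‖b s y - b s' y'‖ ≤ sumL * ‖((s, y) : ℝ × (Fin d → ℝ)) - (s', y')‖ := by
    intro s s' y y' hs hs' hy hy'
    refine (pi_norm_le_iff_of_nonneg (by positivity)).2 fun i => ?_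
    have hsub : b s y i - b s' y' i = ∫ θ in (0:ℝ)..1,
        ((fderiv ℝ Hp
          (y, Gr φ (s, y, ξ) + θ • (Gr φ (s, y, ξ₂) - Gr φ (s, y, ξ) - cg))) (0, Pi.single i 1)
        - (fderiv ℝ Hp
          (y', Gr φ (s', y', ξ) + θ • (Gr φ (s', y', ξ₂) - Gr φ (s', y', ξ) - cg)))
            (0, Pi.single i 1)) := by
      rw [intervalIntegral.integral_sub ((hFcont s y i).intervalIntegrable 0 1)
        ((hFcont s' y' i).intervalIntegrable 0 1)]
    show ‖b s y i - b s' y' i‖ ≤ _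
    rw [hsub]
    have hone : |(1:ℝ) - 0| = 1 := by norm_num
    have := intervalIntegral.norm_integral_le_of_norm_le_const (C := L i * ‖((s, y) : ℝ × (Fin d → ℝ)) - (s', y')‖)
      (f := fun θ => (fderiv ℝ Hp
          (y, Gr φ (s, y, ξ) + θ • (Gr φ (s, y, ξ₂) - Gr φ (s, y, ξ) - cg))) (0, Pi.single i 1)
        - (fderiv ℝ Hp
          (y', Gr φ (s', y', ξ) + θ • (Gr φ (s', y', ξ₂) - Gr φ (s', y', ξ) - cg)))
            (0, Pi.single i 1)) (a := 0) (b := 1) ?_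
    · refine le_trans this ?_
      rw [hone, mul_one]
      have hLle : L i ≤ sumL := Finset.single_le_sum (fun j _ => hLnn j) (Finset.mem_univ i)
      exact mul_le_mul_of_nonneg_right hLle (norm_nonneg _)
    · intro θ hθ
      have hθ' : θ ∈ Icc (0:ℝ) 1 := by
        rcases hθ with ⟨h1, h2⟩
        constructor
        · exact le_of_lt (by simpa using h1)
        · simpa using h2
      exact hLest i θ hθ' s s' y y' hs hs' hy hy'
  -- set up Picard-Lindelöf
  set tMin := min t 0 with htMin
  set tMax := max t 0 with htMax
  have habs : ∀ s ∈ Icc tMin tMax, |s| ≤ |t| := by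
    intro s hs
    refine abs_le.2 ⟨le_trans (le_min (neg_abs_le t) (neg_nonpos_of_nonneg (abs_nonneg t))) hs.1,
      le_trans hs.2 (max_le (le_abs_self t) (abs_nonneg t))⟩
  have hsub2 : ∀ s ∈ Icc tMin tMax, s ∈ Icc (-(T/2)) (T/2) := by
    intro s hs
    have h1 : |s| ≤ T / 2 := le_trans (le_trans (habs s hs) ht) (min_le_left _ _)
    exact abs_le.1 h1
  have hIccT : ∀ s ∈ Icc tMin tMax, s ∈ Ioo (-T) T := by
    intro s hs
    have := hsub2 s hs
    exact ⟨by linarith [this.1], by linarith [this.2]⟩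
  have hball : ∀ y ∈ Metric.closedBall x 1, y ∈ Metric.closedBall (0 : Fin d → ℝ) (R+1) := by
    intro y hy
    rw [Metric.mem_closedBall] at hy
    rw [mem_closedBall_zero_iff]
    calc ‖y‖ = ‖y - x + x‖ := by ring_nf
      _ ≤ ‖y - x‖ + ‖x‖ := norm_add_le _ _
      _ ≤ 1 + R := add_le_add (by rwa [← dist_eq_norm]) hx.le
      _ = R + 1 := by ring
  -- Picard-Lindelöf structure
  have hPL : IsPicardLindelof b (tmin := tMin) (tmax := tMax) ⟨t, min_le_left _ _, le_max_left _ _⟩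
      x 1 0 (Real.toNNReal C) (Real.toNNReal sumL) := by
    refine ⟨?_, ?_, ?_, ?_⟩
    · -- Lipschitz
      intro s hs
      rw [lipschitzOnWith_iff_dist_le_mul]
      intro y hy y' hy'
      rw [dist_eq_norm, dist_eq_norm]
      have := hb_diff s s y y' (hsub2 s hs) (hsub2 s hs) (hball y hy) (hball y' hy')
      have hnorm : ‖((s, y) : ℝ × (Fin d → ℝ)) - (s, y')‖ = ‖y - y'‖ := by
        rw [Prod.norm_def]
        simp [max_eq_right (norm_nonneg (y - y'))]
      rw [hnorm] at this
      refine le_trans this ?_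
      rw [Real.coe_toNNReal sumL hsumLnn]
    · -- continuity in time
      intro y hy
      refine LipschitzOnWith.continuousOn (K := Real.toNNReal sumL) ?_
      rw [lipschitzOnWith_iff_dist_le_mul]
      intro s hs s' hs'
      rw [dist_eq_norm, Real.dist_eq]
      have := hb_diff s s' y y (hsub2 s hs) (hsub2 s' hs') (hball y hy) (hball y hy)
      have hnorm : ‖((s, y) : ℝ × (Fin d → ℝ)) - (s', y)‖ = |s - s'| := by
        rw [Prod.norm_def]
        simp [max_eq_left (abs_nonneg (s - s'))]
      rw [hnorm] at this
      refine le_trans this ?_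
      rw [Real.coe_toNNReal sumL hsumLnn]
    · -- norm bound
      intro s hs y hy
      rw [Real.coe_toNNReal _ hCpos.le]
      refine (pi_norm_le_iff_of_nonneg hCpos.le).2 fun i => ?_
      show ‖b s y i‖ ≤ C
      have hbd : ∀ θ ∈ Set.uIoc (0:ℝ) 1, ‖(fderiv ℝ Hp
          (y, Gr φ (s, y, ξ) + θ • (Gr φ (s, y, ξ₂) - Gr φ (s, y, ξ) - cg)))
            ((0, Pi.single i 1) : PP d)‖ ≤ C := by
        intro θ _
        refine le_trans (ContinuousLinearMap.le_opNorm _ _) ?_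
        have h1 : ‖((0, Pi.single i 1) : PP d)‖ ≤ 1 := by
          rw [Prod.norm_def]
          simp [Pi.norm_single]
        have h2 : ‖fderiv ℝ Hp (y, Gr φ (s, y, ξ)
            + θ • (Gr φ (s, y, ξ₂) - Gr φ (s, y, ξ) - cg))‖ ≤ C := by
          refine hC y _ ?_
          rw [← mem_closedBall_zero_iff]
          exact hball y hy
        calc ‖fderiv ℝ Hp _‖ * ‖((0, Pi.single i 1) : PP d)‖ ≤ C * 1 :=
              mul_le_mul h2 h1 (norm_nonneg _) hCpos.le
          _ = C := mul_one _
      have := intervalIntegral.norm_integral_le_of_norm_le_const hbd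
      simpa using this
    · -- C * interval ≤ 1
      rw [Real.coe_toNNReal _ hCpos.le, NNReal.coe_one, NNReal.coe_zero, sub_zero]
      show C * max (tMax - t) (t - tMin) ≤ 1
      have hmax : max (tMax - t) (t - tMin) = |t| := by
        rw [htMax, htMin]
        rcases le_total 0 t with h | h
        · rw [max_eq_left h, min_eq_right h, abs_of_nonneg h] <;> simp [h]
        · rw [max_eq_right h, min_eq_left h, abs_of_nonpos h] <;> simp [h]
      rw [hmax]
      have h1 : |t| ≤ 1 / C := le_trans ht (min_le_right _ _)
      calc C * |t| ≤ C * (1 / C) := mul_le_mul_of_nonneg_left h1 hCpos.le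
        _ = 1 := by field_simp
  obtain ⟨f, hft, hfd⟩ := hPL.exists_eq_forall_mem_Icc_hasDerivWithinAt₀
  replace hft : f t = x := hft
  -- the composite is constant
  have hderiv0 : ∀ s ∈ Icc tMin tMax,
      HasDerivWithinAt (fun s => ψ (s, f s)) 0 (Icc tMin tMax) s := by
    intro s hs
    have hsT : s ∈ Ioo (-T) T := hIccT s hs
    set y := f s with hydef
    set D2 := fderiv ℝ (Phi φ) (s, y, ξ₂) with hD2
    set D1 := fderiv ℝ (Phi φ) (s, y, ξ) with hD1
    have hincl : ∀ ζ : Fin d → ℝ,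
        HasFDerivAt (fun q : ℝ × (Fin d → ℝ) => ((q.1, q.2, ζ) : EE d)) KK (s, y) := by
      intro ζ
      have h : (fun q : ℝ × (Fin d → ℝ) => ((q.1, q.2, ζ) : EE d))
          = fun q => KK q + ((0 : ℝ), (0 : Fin d → ℝ), ζ) := by
        funext q; simp [Prod.ext_iff]
      rw [h]; exact KK.hasFDerivAt.add_const _
    have h2 : HasFDerivAt (fun q : ℝ × (Fin d → ℝ) => Phi φ (q.1, q.2, ξ₂))
        (D2.comp KK) (s, y) :=
      by have h := (phi_hasFDerivAt hφ (p := (s, y, ξ₂)) hsT).comp (s, y) (hincl ξ₂); exact h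
    have h1 : HasFDerivAt (fun q : ℝ × (Fin d → ℝ) => Phi φ (q.1, q.2, ξ))
        (D1.comp KK) (s, y) :=
      by have h := (phi_hasFDerivAt hφ (p := (s, y, ξ)) hsT).comp (s, y) (hincl ξ); exact h
    set gR : Fin d → ℝ := fun i => (γ i : ℝ) with hgR
    set Lc : (ℝ × (Fin d → ℝ)) →L[ℝ] ℝ :=
      (2 * Real.pi) • ((dotCLM gR).comp (ContinuousLinearMap.snd ℝ ℝ (Fin d → ℝ))) with hLc
    have hlin : HasFDerivAt (fun q : ℝ × (Fin d → ℝ) =>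
        2 * Real.pi * ∑ i, q.2 i * γ i) Lc (s, y) := by
      have h : (fun q : ℝ × (Fin d → ℝ) => 2 * Real.pi * ∑ i, q.2 i * (γ i : ℝ))
          = fun q => Lc q := by
        funext q
        simp [hLc, dotCLM_apply, hgR]
      rw [h]; exact Lc.hasFDerivAt
    have hψd : HasFDerivAt ψ ((D2.comp KK - D1.comp KK) - Lc) (s, y) := by
      have := (h2.sub h1).sub hlin
      exact this
    have hpair : HasDerivWithinAt (fun s => ((s, f s) : ℝ × (Fin d → ℝ)))
        (1, b s y) (Icc tMin tMax) s :=
      (hasDerivWithinAt_id s _).prodMk (hfd s hs)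
    have hcomp := hψd.comp_hasDerivWithinAt s hpair
    have hzero : ((D2.comp KK - D1.comp KK) - Lc) ((1 : ℝ), b s y) = 0 := by
      set v := b s y with hv
      set G1 := Gr φ (s, y, ξ) with hG1
      set G2 := Gr φ (s, y, ξ₂) with hG2
      set B := G2 - G1 - cg with hB
      have e0 : ((D2.comp KK - D1.comp KK) - Lc) ((1 : ℝ), v)
          = D2 (1, v, 0) - D1 (1, v, 0) - 2 * Real.pi * ∑ i, v i * γ i := by
        simp [ContinuousLinearMap.sub_apply, ContinuousLinearMap.comp_apply, hLc,
          dotCLM_apply, hgR]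
      have e1 : ∀ (D : EE d →L[ℝ] ℝ) (u : Fin d → ℝ),
          D (1, u, 0) = D (1, 0, 0) + D (0, u, 0) := by
        intro D u
        rw [← map_add]
        congr 1
        simp [Prod.ext_iff]
      have e2 : D2 (1, 0, 0) = - H y G2 := HJ_Gr hφ hHJ hsT y ξ₂
      have e3 : D1 (1, 0, 0) = - H y G1 := HJ_Gr hφ hHJ hsT y ξ
      have e4 : D2 (0, v, 0) = ∑ i, v i * G2 i := decomp_x D2 v
      have e5 : D1 (0, v, 0) = ∑ i, v i * G1 i := decomp_x D1 v
      have e6 : ∑ i, v i * B i = H y (G1 + B) - H y G1 := by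
        have := ftc_sum (H := H) hH y G1 B
        have hveq : ∀ i, v i = ∫ θ in (0:ℝ)..1,
            (fderiv ℝ (fun p : PP d => H p.1 p.2) (y, G1 + θ • B)) (0, Pi.single i 1) := by
          intro i; rfl
        rw [← this]
      have e7 : H y G2 = H y (G1 + B) := by
        have hG2eq : G2 = (G1 + B) + fun i => 2 * Real.pi * (γ i : ℝ) := by
          funext i
          simp only [hB, hcg, Pi.add_apply, Pi.sub_apply]
          ring
        rw [hG2eq, hper]
      have e8 : ∑ i, v i * B i
          = ∑ i, v i * G2 i - ∑ i, v i * G1 i - 2 * Real.pi * ∑ i, v i * γ i := by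
        rw [Finset.mul_sum, ← Finset.sum_sub_distrib, ← Finset.sum_sub_distrib]
        refine Finset.sum_congr rfl fun i _ => ?_
        simp only [hB, hcg, Pi.sub_apply]
        ring
      rw [e0, e1 D2 v, e1 D1 v, e2, e3, e4, e5]
      have := e6
      rw [e8] at this
      rw [← e7] at this
      linarith
    rw [hzero] at hcomp
    exact hcomp
  -- conclude constancy
  have hmem0 : (0:ℝ) ∈ Icc tMin tMax := ⟨min_le_right t 0, le_max_right t 0⟩
  have hmemt : t ∈ Icc tMin tMax := ⟨min_le_left t 0, le_max_left t 0⟩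
  have hconst := Convex.norm_image_sub_le_of_norm_hasFDerivWithin_le
    (f := fun s => ψ (s, f s)) (f' := fun _ => (0 : ℝ →L[ℝ] ℝ)) (C := 0)
    (fun s hs => by
      have h := (hderiv0 s hs).hasFDerivWithinAt
      rwa [show ContinuousLinearMap.toSpanSingleton ℝ (0:ℝ) = 0 from by ext u; simp]
        at h)
    (fun s _ => by simp) (convex_Icc tMin tMax) hmem0 hmemt
  have : ψ (t, f t) = ψ (0, f 0) := by
    have h := hconst
    simp only [norm_le_zero_iff, zero_mul] at h
    exact sub_eq_zero.1 h
  rw [hft] at this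
  rw [this, hψzero (f 0)]

/-- helper: differentiability from `C¹` on the open strip. -/
lemma hasFDerivAt_of_C1 {g : EE d → ℝ} (hg : ContDiffOn ℝ 1 g (Ioo (-T) T ×ˢ univ))
    {p : EE d} (hp : p.1 ∈ Ioo (-T) T) : HasFDerivAt g (fderiv ℝ g p) p :=
  ((hg.differentiableOn one_ne_zero).differentiableAt
    ((omega_open T).mem_nhds ⟨hp, mem_univ _⟩)).hasFDerivAt

/-- transfer of derivatives through the periodicity identity. -/
lemma transfer_fderiv (hφ : ContDiffOn ℝ (⊤ : ℕ∞) (Phi φ) (Ioo (-T) T ×ˢ univ))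
    {t₁ R : ℝ}
    (hperφ : ∀ (ξ : Fin d → ℝ) (γ : Fin d → ℤ) (t : ℝ) (x : Fin d → ℝ),
      |t| ≤ t₁ → ‖x‖ < R →
      Phi φ (t, x, ξ + fun i => 2 * Real.pi * γ i)
        = Phi φ (t, x, ξ) + 2 * Real.pi * ∑ i, x i * γ i)
    {t : ℝ} {x : Fin d → ℝ} (htT : t ∈ Ioo (-T) T) (ht : |t| < t₁) (hx : ‖x‖ < R)
    (ξ : Fin d → ℝ) (γ : Fin d → ℤ) (w : EE d) :
    fderiv ℝ (Phi φ) (t, x, ξ + fun i => 2 * Real.pi * γ i) w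
      = fderiv ℝ (Phi φ) (t, x, ξ) w + 2 * Real.pi * ∑ i, w.2.1 i * γ i := by
  classical
  set cg : Fin d → ℝ := fun i => 2 * Real.pi * γ i with hcg
  set gR : Fin d → ℝ := fun i => (γ i : ℝ) with hgR
  set W : Set (EE d) := Ioo (-t₁) t₁ ×ˢ (Metric.ball (0 : Fin d → ℝ) R ×ˢ univ) with hW
  have hWopen : IsOpen W := isOpen_Ioo.prod ((Metric.isOpen_ball).prod isOpen_univ)
  have hmemW : ((t, x, ξ) : EE d) ∈ W := by
    refine ⟨abs_lt.1 ht, ?_, mem_univ _⟩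
    rwa [mem_ball_zero_iff]
  set f₁ : EE d → ℝ := fun p => Phi φ (p.1, p.2.1, p.2.2 + cg) with hf₁
  set Mc : EE d →L[ℝ] ℝ :=
    (2 * Real.pi) • ((dotCLM gR).comp
      ((ContinuousLinearMap.fst ℝ (Fin d → ℝ) (Fin d → ℝ)).comp
        (ContinuousLinearMap.snd ℝ ℝ ((Fin d → ℝ) × (Fin d → ℝ))))) with hMc
  set f₂ : EE d → ℝ := fun p => Phi φ p + Mc p with hf₂
  have hMc_apply : ∀ u : EE d, Mc u = 2 * Real.pi * ∑ i, u.2.1 i * γ i := by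
    intro u
    simp [hMc, dotCLM_apply, hgR]
  have hEq : f₁ =ᶠ[nhds ((t, x, ξ) : EE d)] f₂ := by
    filter_upwards [hWopen.mem_nhds hmemW] with p hp
    have h1 : |p.1| ≤ t₁ := le_of_lt (abs_lt.2 hp.1)
    have h2 : ‖p.2.1‖ < R := mem_ball_zero_iff.1 hp.2.1
    show Phi φ (p.1, p.2.1, p.2.2 + cg) = Phi φ p + Mc p
    rw [hperφ p.2.2 γ p.1 p.2.1 h1 h2, hMc_apply]
  -- derivative of f₁
  have hd1 : HasFDerivAt f₁ (fderiv ℝ (Phi φ) (t, x, ξ + cg)) (t, x, ξ) := by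
    have hshift : HasFDerivAt (fun p : EE d => p + ((0 : ℝ), (0 : Fin d → ℝ), cg))
        (ContinuousLinearMap.id ℝ (EE d)) (t, x, ξ) := (hasFDerivAt_id _).add_const _
    have hΦd : HasFDerivAt (Phi φ) (fderiv ℝ (Phi φ) (t, x, ξ + cg)) (t, x, ξ + cg) :=
      phi_hasFDerivAt hφ (p := (t, x, ξ + cg)) htT
    have h : ((t, x, ξ) : EE d) + ((0 : ℝ), (0 : Fin d → ℝ), cg) = (t, x, ξ + cg) := by
      simp [Prod.ext_iff]
    have hΦd' : HasFDerivAt (Phi φ) (fderiv ℝ (Phi φ) (t, x, ξ + cg))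
        (((t, x, ξ) : EE d) + ((0 : ℝ), (0 : Fin d → ℝ), cg)) := by
      rw [h]; exact hΦd
    have := hΦd'.comp ((t, x, ξ) : EE d) hshift
    have h2 : (Phi φ ∘ fun p : EE d => p + ((0 : ℝ), (0 : Fin d → ℝ), cg)) = f₁ := by
      funext p
      show Phi φ (p + _) = Phi φ (p.1, p.2.1, p.2.2 + cg)
      congr 1
      simp [Prod.ext_iff]
    rw [h2] at this
    simpa using this
  have hd2 : HasFDerivAt f₂ (fderiv ℝ (Phi φ) (t, x, ξ) + Mc) (t, x, ξ) :=
    (phi_hasFDerivAt hφ (p := (t, x, ξ)) htT).add Mc.hasFDerivAt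
  have hd1' : HasFDerivAt f₂ (fderiv ℝ (Phi φ) (t, x, ξ + cg)) (t, x, ξ) :=
    hd1.congr_of_eventuallyEq hEq.symm
  have huniq := hd1'.unique hd2
  have : fderiv ℝ (Phi φ) (t, x, ξ + cg) w
      = (fderiv ℝ (Phi φ) (t, x, ξ)) w + Mc w := by rw [huniq]; rfl
  rw [show (ξ + fun i => 2 * Real.pi * (γ i : ℝ)) = ξ + cg from rfl, this, hMc_apply]

/-- Rolle plus passage to the limit. -/
lemma rolle_limit (hT : 0 < T) (hφ : ContDiffOn ℝ (⊤ : ℕ∞) (Phi φ) (Ioo (-T) T ×ˢ univ))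
    (w : EE d)
    {tn : ℕ → ℝ} {xn ξn : ℕ → (Fin d → ℝ)} {xb ξb : Fin d → ℝ}
    (htn0 : ∀ n, tn n ≠ 0) (htnT : ∀ n, tn n ∈ Ioo (-T) T)
    (htend : Filter.Tendsto tn Filter.atTop (nhds 0))
    (hxend : Filter.Tendsto (fun n => ((xn n, ξn n) : PP d)) Filter.atTop (nhds (xb, ξb)))
    (hend : ∀ n, Uv φ w (tn n, xn n, ξn n) = Uv φ w (0, xn n, ξn n)) :
    fderiv ℝ (Uv φ w) (0, xb, ξb) (1, 0, 0) = 0 := by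
  have hUc : ContDiffOn ℝ 1 (Uv φ w) (Ioo (-T) T ×ˢ univ) := Uv_contDiffOn hφ w 1
  -- Rolle for each n
  have hex : ∀ n, ∃ c : ℝ, |c| ≤ |tn n| ∧
      fderiv ℝ (Uv φ w) (c, xn n, ξn n) (1, 0, 0) = 0 := by
    intro n
    have hTn := htnT n
    have hmem : ∀ s : ℝ, |s| ≤ |tn n| → s ∈ Ioo (-T) T := by
      intro s hs
      have h1 : |tn n| < T := abs_lt.2 hTn
      have := abs_le.1 hs
      constructor <;> [linarith [this.1]; linarith [this.2]]
    have hdiff : ∀ s : ℝ, |s| ≤ |tn n| →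
        HasDerivAt (fun s => Uv φ w (s, xn n, ξn n))
          (fderiv ℝ (Uv φ w) (s, xn n, ξn n) (1, 0, 0)) s := by
      intro s hs
      exact sliceT (hasFDerivAt_of_C1 hUc (p := (s, xn n, ξn n)) (hmem s hs))
    rcases lt_or_gt_of_ne (htn0 n) with hlt | hgt
    · -- tn n < 0, work on [tn n, 0]
      obtain ⟨c, hc, hc0⟩ := exists_hasDerivAt_eq_zero (a := tn n) (b := 0)
        (f := fun s => Uv φ w (s, xn n, ξn n))
        (f' := fun s => fderiv ℝ (Uv φ w) (s, xn n, ξn n) (1, 0, 0)) hlt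
        (fun s hs => by
          have habs : |s| ≤ |tn n| := by
            rw [abs_of_nonpos hs.2, abs_of_neg hlt]; linarith [hs.1]
          exact (hdiff s habs).continuousAt.continuousWithinAt)
        (hend n)
        (fun s hs => hdiff s (by
          rw [abs_of_neg hs.2, abs_of_neg hlt]; linarith [hs.1]))
      refine ⟨c, ?_, hc0⟩
      rw [abs_of_neg hc.2, abs_of_neg hlt]; linarith [hc.1]
    · -- 0 < tn n, work on [0, tn n]
      obtain ⟨c, hc, hc0⟩ := exists_hasDerivAt_eq_zero (a := 0) (b := tn n)
        (f := fun s => Uv φ w (s, xn n, ξn n))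
        (f' := fun s => fderiv ℝ (Uv φ w) (s, xn n, ξn n) (1, 0, 0)) hgt
        (fun s hs => by
          have habs : |s| ≤ |tn n| := by
            rw [abs_of_nonneg hs.1, abs_of_pos hgt]; linarith [hs.2]
          exact (hdiff s habs).continuousAt.continuousWithinAt)
        ((hend n).symm)
        (fun s hs => hdiff s (by
          rw [abs_of_pos hs.1, abs_of_pos hgt]; linarith [hs.2]))
      refine ⟨c, ?_, hc0⟩
      rw [abs_of_pos hc.1, abs_of_pos hgt]; linarith [hc.2]
  choose σ hσabs hσ0 using hex
  have hσtend : Filter.Tendsto σ Filter.atTop (nhds 0) := by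
    refine squeeze_zero_norm hσabs ?_
    have := htend.abs
    simpa using this
  have hptend : Filter.Tendsto (fun n => ((σ n, xn n, ξn n) : EE d)) Filter.atTop
      (nhds ((0 : ℝ), xb, ξb)) := hσtend.prodMk_nhds hxend
  have h0T : (0 : ℝ) ∈ Ioo (-T) T := ⟨by linarith, hT⟩
  have hcontF : ContinuousOn (fun p : EE d => fderiv ℝ (Uv φ w) p (1, 0, 0))
      (Ioo (-T) T ×ˢ univ) :=
    (ContinuousLinearMap.apply ℝ ℝ ((1, 0, 0) : EE d)).continuous.comp_continuousOn
      (hUc.continuousOn_fderiv_of_isOpen (omega_open T) le_rfl)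
  have hca : ContinuousAt (fun p : EE d => fderiv ℝ (Uv φ w) p (1, 0, 0)) (0, xb, ξb) :=
    hcontF.continuousAt ((omega_open T).mem_nhds ⟨h0T, mem_univ _⟩)
  have hcomp := hca.tendsto.comp hptend
  have hzero : Filter.Tendsto (fun _ : ℕ => (0 : ℝ)) Filter.atTop
      (nhds (fderiv ℝ (Uv φ w) (0, xb, ξb) (1, 0, 0))) :=
    Filter.Tendsto.congr hσ0 hcomp
  exact (tendsto_nhds_unique hzero tendsto_const_nhds)

lemma final_contra (hH : ContDiff ℝ (⊤ : ℕ∞) fun p : PP d => H p.1 p.2) (hT : 0 < T)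
    (hφ : ContDiffOn ℝ (⊤ : ℕ∞) (Phi φ) (Ioo (-T) T ×ˢ univ))
    (hHJ : ∀ t ∈ Set.Ioo (-T) T, ∀ x ξ,
      deriv (fun s => φ s x ξ) t + H x (gradx (fun x' => φ t x' ξ) x) = 0)
    (hinit : ∀ x ξ, φ 0 x ξ = ∑ i, x i * ξ i)
    {xb ξb : Fin d → ℝ}
    (h1 : ∀ i, fderiv ℝ (Uv φ ((0:ℝ), Pi.single i 1, (0 : Fin d → ℝ)))
      ((0:ℝ), xb, ξb) (1, 0, 0) = 0)
    (h2 : ∀ i, fderiv ℝ (Uv φ ((0:ℝ), (0 : Fin d → ℝ), Pi.single i 1))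
      ((0:ℝ), xb, ξb) (1, 0, 0) = 0) :
    fderiv ℝ (fun p : PP d => H p.1 p.2) (xb, ξb) = 0 := by
  classical
  set Hp : PP d → ℝ := fun p => H p.1 p.2 with hHpdef
  set p₀ : EE d := ((0:ℝ), xb, ξb) with hp₀
  have h0T : (0:ℝ) ∈ Ioo (-T) T := ⟨by linarith, hT⟩
  have hΩnhds : (Ioo (-T) T ×ˢ univ : Set (EE d)) ∈ nhds p₀ :=
    (omega_open T).mem_nhds ⟨h0T, mem_univ _⟩
  have hf'd : HasFDerivAt (fun p => fderiv ℝ (Phi φ) p)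
      (fderiv ℝ (fun p => fderiv ℝ (Phi φ) p) p₀) p₀ :=
    (((fderiv_phi_contDiffOn hφ 1).differentiableOn (by simp)).differentiableAt hΩnhds).hasFDerivAt
  set f2 := fderiv ℝ (fun p => fderiv ℝ (Phi φ) p) p₀ with hf2
  have hev : ∀ᶠ p in nhds p₀, HasFDerivAt (Phi φ) (fderiv ℝ (Phi φ) p) p := by
    filter_upwards [hΩnhds] with p hp
    exact phi_hasFDerivAt hφ hp.1
  have hsymm : ∀ u v : EE d, f2 u v = f2 v u := fun u v =>
    second_derivative_symmetric_of_eventually hev hf'd u v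
  have hUvd : ∀ w : EE d, HasFDerivAt (Uv φ w) ((ContinuousLinearMap.apply ℝ ℝ w).comp f2) p₀ :=
    fun w => (ContinuousLinearMap.apply ℝ ℝ w).hasFDerivAt.comp p₀ hf'd
  have hUvfd : ∀ w : EE d, fderiv ℝ (Uv φ w) p₀ = (ContinuousLinearMap.apply ℝ ℝ w).comp f2 :=
    fun w => (hUvd w).fderiv
  -- h1/h2 in terms of f2
  have h1' : ∀ i, f2 (1, 0, 0) ((0:ℝ), Pi.single i 1, (0 : Fin d → ℝ)) = 0 := by
    intro i
    have := h1 i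
    rw [hUvfd] at this
    exact this
  have h2' : ∀ i, f2 (1, 0, 0) ((0:ℝ), (0 : Fin d → ℝ), Pi.single i 1) = 0 := by
    intro i
    have := h2 i
    rw [hUvfd] at this
    exact this
  -- spatial-spatial second derivatives at t = 0
  have hspat : ∀ (j : Fin d) (u u' : Fin d → ℝ),
      f2 ((0:ℝ), u, u') ((0:ℝ), Pi.single j 1, (0 : Fin d → ℝ)) = u' j := by
    intro j u u'
    set wj : EE d := ((0:ℝ), Pi.single j 1, (0 : Fin d → ℝ)) with hwj
    set Jq : PP d →L[ℝ] EE d := (0 : PP d →L[ℝ] ℝ).prod (ContinuousLinearMap.id ℝ (PP d))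
      with hJq
    have hcompj : HasFDerivAt ((Uv φ wj) ∘ Jq)
        (((ContinuousLinearMap.apply ℝ ℝ wj).comp f2).comp Jq) ((xb, ξb) : PP d) :=
      (hUvd wj).comp ((xb, ξb) : PP d) Jq.hasFDerivAt
    have heq : (Uv φ wj) ∘ Jq = fun q : PP d => q.2 j := by
      funext q
      exact (init_fderiv hT hφ hinit q.1 q.2).1 j
    rw [heq] at hcompj
    set Pj : PP d →L[ℝ] ℝ := (ContinuousLinearMap.proj j).comp
      (ContinuousLinearMap.snd ℝ (Fin d → ℝ) (Fin d → ℝ)) with hPj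
    have hPjd : HasFDerivAt (fun q : PP d => q.2 j) Pj ((xb, ξb) : PP d) := Pj.hasFDerivAt
    have huniq := hcompj.unique hPjd
    have := congrArg (fun (L : PP d →L[ℝ] ℝ) => L (u, u')) huniq
    simpa [hJq, hPj] using this
  -- chain rule for Uv φ (1,0,0) = -H(x, Gr)
  set wjf : Fin d → EE d := fun j => ((0:ℝ), Pi.single j 1, (0 : Fin d → ℝ)) with hwjf
  set DGr : EE d →L[ℝ] (Fin d → ℝ) :=
    ContinuousLinearMap.pi (fun j => (ContinuousLinearMap.apply ℝ ℝ (wjf j)).comp f2) with hDGr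
  have hGrd : HasFDerivAt (Gr φ) DGr p₀ := hasFDerivAt_pi.2 fun j => hUvd (wjf j)
  set Dx21 : EE d →L[ℝ] (Fin d → ℝ) :=
    (ContinuousLinearMap.fst ℝ (Fin d → ℝ) (Fin d → ℝ)).comp
      (ContinuousLinearMap.snd ℝ ℝ ((Fin d → ℝ) × (Fin d → ℝ))) with hDx21
  have hNd : HasFDerivAt (fun p : EE d => ((p.2.1, Gr φ p) : PP d)) (Dx21.prod DGr) p₀ :=
    (Dx21.hasFDerivAt).prodMk hGrd
  have hgr0 : Gr φ p₀ = ξb := Gr_zero hT hφ hinit xb ξb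
  have hHd : HasFDerivAt Hp (fderiv ℝ Hp ((xb, Gr φ p₀) : PP d)) ((xb, Gr φ p₀) : PP d) :=
    ((hH.differentiable (by simp)) _).hasFDerivAt
  have hVtc : HasFDerivAt (fun p : EE d => -(Hp (p.2.1, Gr φ p)))
      (-((fderiv ℝ Hp ((xb, Gr φ p₀) : PP d)).comp (Dx21.prod DGr))) p₀ :=
    (hHd.comp p₀ hNd).neg
  have hEqVt : (Uv φ ((1:ℝ), (0 : Fin d → ℝ), (0 : Fin d → ℝ)))
      =ᶠ[nhds p₀] fun p : EE d => -(Hp (p.2.1, Gr φ p)) := by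
    filter_upwards [hΩnhds] with p hp
    exact HJ_Gr hφ hHJ hp.1 p.2.1 p.2.2
  have hVtd : HasFDerivAt (Uv φ ((1:ℝ), (0 : Fin d → ℝ), (0 : Fin d → ℝ)))
      (-((fderiv ℝ Hp ((xb, Gr φ p₀) : PP d)).comp (Dx21.prod DGr))) p₀ :=
    hVtc.congr_of_eventuallyEq hEqVt
  have huniq2 : (ContinuousLinearMap.apply ℝ ℝ ((1:ℝ), (0 : Fin d → ℝ), (0 : Fin d → ℝ))).comp f2
      = -((fderiv ℝ Hp ((xb, Gr φ p₀) : PP d)).comp (Dx21.prod DGr)) :=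
    (hUvd _).unique hVtd
  rw [hgr0] at huniq2
  -- evaluate on the two families of directions
  have hx0 : ∀ i, fderiv ℝ Hp ((xb, ξb) : PP d) (Pi.single i 1, 0) = 0 := by
    intro i
    have := congrArg (fun (L : EE d →L[ℝ] ℝ) =>
      L ((0:ℝ), Pi.single i 1, (0 : Fin d → ℝ))) huniq2
    simp only [ContinuousLinearMap.comp_apply, ContinuousLinearMap.neg_apply] at this
    have hL : f2 ((0:ℝ), Pi.single i 1, (0 : Fin d → ℝ)) (1, 0, 0) = 0 := by
      rw [hsymm]; exact h1' i
    have hDGrv : DGr ((0:ℝ), Pi.single i 1, (0 : Fin d → ℝ)) = 0 := by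
      funext j
      show f2 ((0:ℝ), Pi.single i 1, (0 : Fin d → ℝ)) (wjf j) = 0
      exact hspat j (Pi.single i 1) 0
    have hDx21v : Dx21 ((0:ℝ), Pi.single i 1, (0 : Fin d → ℝ)) = Pi.single i 1 := rfl
    rw [show (ContinuousLinearMap.apply ℝ ℝ ((1:ℝ), (0 : Fin d → ℝ), (0 : Fin d → ℝ)))
        (f2 ((0:ℝ), Pi.single i 1, (0 : Fin d → ℝ)))
      = f2 ((0:ℝ), Pi.single i 1, (0 : Fin d → ℝ)) (1, 0, 0) from rfl, hL] at this
    rw [show (Dx21.prod DGr) ((0:ℝ), Pi.single i 1, (0 : Fin d → ℝ))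
      = ((Dx21 ((0:ℝ), Pi.single i 1, (0 : Fin d → ℝ)),
          DGr ((0:ℝ), Pi.single i 1, (0 : Fin d → ℝ))) : PP d) from rfl, hDx21v, hDGrv] at this
    linarith [this]
  have hxi0 : ∀ i, fderiv ℝ Hp ((xb, ξb) : PP d) (0, Pi.single i 1) = 0 := by
    intro i
    have := congrArg (fun (L : EE d →L[ℝ] ℝ) =>
      L ((0:ℝ), (0 : Fin d → ℝ), Pi.single i 1)) huniq2
    simp only [ContinuousLinearMap.comp_apply, ContinuousLinearMap.neg_apply] at this
    have hL : f2 ((0:ℝ), (0 : Fin d → ℝ), Pi.single i 1) (1, 0, 0) = 0 := by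
      rw [hsymm]; exact h2' i
    have hDGrv : DGr ((0:ℝ), (0 : Fin d → ℝ), Pi.single i 1) = Pi.single i 1 := by
      funext j
      show f2 ((0:ℝ), (0 : Fin d → ℝ), Pi.single i 1) (wjf j) = (Pi.single i 1 : Fin d → ℝ) j
      exact hspat j 0 (Pi.single i 1)
    have hDx21v : Dx21 ((0:ℝ), (0 : Fin d → ℝ), Pi.single i 1) = 0 := rfl
    rw [show (ContinuousLinearMap.apply ℝ ℝ ((1:ℝ), (0 : Fin d → ℝ), (0 : Fin d → ℝ)))
        (f2 ((0:ℝ), (0 : Fin d → ℝ), Pi.single i 1))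
      = f2 ((0:ℝ), (0 : Fin d → ℝ), Pi.single i 1) (1, 0, 0) from rfl, hL] at this
    rw [show (Dx21.prod DGr) ((0:ℝ), (0 : Fin d → ℝ), Pi.single i 1)
      = ((Dx21 ((0:ℝ), (0 : Fin d → ℝ), Pi.single i 1),
          DGr ((0:ℝ), (0 : Fin d → ℝ), Pi.single i 1)) : PP d) from rfl, hDx21v, hDGrv] at this
    linarith [this]
  -- conclude the full derivative vanishes
  refine ContinuousLinearMap.ext fun u => ?_
  have hu : (u : PP d) = ((u.1, (0 : Fin d → ℝ)) : PP d) + ((0 : Fin d → ℝ), u.2) := by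
    simp [Prod.ext_iff]
  rw [hu, map_add, decomp_p1, decomp_p2]
  simp [hx0, hxi0]

/-- the key quantitative statement: no nonzero-time critical points for small time. -/
lemma key {U : Set ℝ}
    (hH : ContDiff ℝ (⊤ : ℕ∞) fun p : (Fin d → ℝ) × (Fin d → ℝ) => H p.1 p.2)
    (hper : ∀ x ξ (γ : Fin d → ℤ), H x (ξ + fun i => 2 * Real.pi * γ i) = H x ξ)
    (hU : ∀ x ξ, H x ξ ∈ U →
      fderiv ℝ (fun p : (Fin d → ℝ) × (Fin d → ℝ) => H p.1 p.2) (x, ξ) ≠ 0)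
    (hcpt : IsCompact {p : (Fin d → ℝ) × (Fin d → ℝ) |
        H p.1 p.2 ∈ U ∧ ∀ i, p.2 i ∈ Set.Icc 0 (2 * Real.pi)})
    (hT : 0 < T)
    (hφ : ContDiffOn ℝ (⊤ : ℕ∞) (Phi φ) (Ioo (-T) T ×ˢ univ))
    (hHJ : ∀ t ∈ Set.Ioo (-T) T, ∀ x ξ,
      deriv (fun s => φ s x ξ) t + H x (gradx (fun x' => φ t x' ξ) x) = 0)
    (hinit : ∀ x ξ, φ 0 x ξ = ∑ i, x i * ξ i) :
    ∃ t₀, 0 < t₀ ∧ t₀ ≤ T ∧ ∀ lam ∈ U, ∀ (t : ℝ) (x ξ : Fin d → ℝ),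
      |t| < t₀ → t ≠ 0 → ¬ IsCriticalPt φ lam t x ξ := by
  classical
  by_contra hcon
  have h2pi : (0:ℝ) < 2 * Real.pi := Real.two_pi_pos
  -- extract sequences of bad critical points
  have hex : ∀ n : ℕ, ∃ (lam t : ℝ) (x ξ : Fin d → ℝ), lam ∈ U ∧
      |t| < min T (1 / (n + 1)) ∧ t ≠ 0 ∧ IsCriticalPt φ lam t x ξ := by
    intro n
    have hpos : (0:ℝ) < min T (1 / (n + 1)) := lt_min hT (by positivity)
    have h1 : ¬ (∀ lam ∈ U, ∀ (t : ℝ) (x ξ : Fin d → ℝ),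
        |t| < min T (1 / (n + 1)) → t ≠ 0 → ¬ IsCriticalPt φ lam t x ξ) := by
      intro hP
      exact hcon ⟨min T (1 / (n + 1)), hpos, min_le_left _ _, hP⟩
    push_neg at h1
    obtain ⟨lam, hlam, t, x, ξ, h2, h3, h4⟩ := h1
    exact ⟨lam, t, x, ξ, hlam, h2, h3, h4⟩
  choose lam tt xx ξξ hlamU htlt htne hcrit using hex
  have httIoo : ∀ n, tt n ∈ Ioo (-T) T := by
    intro n
    have := lt_of_lt_of_le (htlt n) (min_le_left _ _)
    exact ⟨by linarith [(abs_lt.1 this).1], (abs_lt.1 this).2⟩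
  have hHam : ∀ n, H (xx n) (ξξ n) = lam n := fun n =>
    crit_ham hφ hHJ (httIoo n) (hcrit n)
  -- the reductions mod 2π
  set γγ : ℕ → Fin d → ℤ := fun n i => ⌊ξξ n i / (2 * Real.pi)⌋ with hγγ
  set ξr : ℕ → Fin d → ℝ := fun n i => 2 * Real.pi * Int.fract (ξξ n i / (2 * Real.pi)) with hξr
  have hsplit : ∀ n, ξξ n = ξr n + fun i => 2 * Real.pi * γγ n i := by
    intro n
    funext i
    have h : Int.fract (ξξ n i / (2 * Real.pi)) + (⌊ξξ n i / (2 * Real.pi)⌋ : ℝ)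
        = ξξ n i / (2 * Real.pi) := Int.fract_add_floor _
    have h3 : 2 * Real.pi * (ξξ n i / (2 * Real.pi)) = ξξ n i := by field_simp
    show ξξ n i = 2 * Real.pi * Int.fract (ξξ n i / (2 * Real.pi))
      + 2 * Real.pi * (⌊ξξ n i / (2 * Real.pi)⌋ : ℝ)
    have h2 : 2 * Real.pi * (Int.fract (ξξ n i / (2 * Real.pi))
        + (⌊ξξ n i / (2 * Real.pi)⌋ : ℝ)) = ξξ n i := by rw [h, h3]
    linarith [h2, mul_add (2 * Real.pi) (Int.fract (ξξ n i / (2 * Real.pi)))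
      ((⌊ξξ n i / (2 * Real.pi)⌋ : ℝ))]
  have hsplit' : ∀ n i, ξξ n i = ξr n i + 2 * Real.pi * γγ n i := by
    intro n i
    have := congrFun (hsplit n) i
    simpa using this
  have hKmem : ∀ n, ((xx n, ξr n) : PP d) ∈ {p : (Fin d → ℝ) × (Fin d → ℝ) |
      H p.1 p.2 ∈ U ∧ ∀ i, p.2 i ∈ Set.Icc 0 (2 * Real.pi)} := by
    intro n
    constructor
    · show H (xx n) (ξr n) ∈ U
      have h1 : H (xx n) (ξr n + fun i => 2 * Real.pi * γγ n i) = H (xx n) (ξr n) :=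
        hper (xx n) (ξr n) (γγ n)
      rw [← hsplit n] at h1
      rw [← h1, hHam n]
      exact hlamU n
    · intro i
      have h0 : (0:ℝ) ≤ Int.fract (ξξ n i / (2 * Real.pi)) := Int.fract_nonneg _
      have h1 : Int.fract (ξξ n i / (2 * Real.pi)) ≤ 1 := (Int.fract_lt_one _).le
      constructor
      · exact mul_nonneg h2pi.le h0
      · calc 2 * Real.pi * Int.fract (ξξ n i / (2 * Real.pi)) ≤ 2 * Real.pi * 1 :=
            mul_le_mul_of_nonneg_left h1 h2pi.le
          _ = 2 * Real.pi := mul_one _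
  -- a bound for the x-components
  obtain ⟨r0, hr0⟩ := hcpt.isBounded.subset_closedBall (0 : PP d)
  set R : ℝ := max r0 0 + 1 with hR
  have hRpos : 0 < R := by positivity
  have hxR : ∀ n, ‖xx n‖ < R := by
    intro n
    have h1 : ‖((xx n, ξr n) : PP d)‖ ≤ r0 := mem_closedBall_zero_iff.1 (hr0 (hKmem n))
    have h2 : ‖xx n‖ ≤ ‖((xx n, ξr n) : PP d)‖ := by
      exact norm_fst_le ((xx n, ξr n) : PP d)
    calc ‖xx n‖ ≤ r0 := le_trans h2 h1
      _ ≤ max r0 0 := le_max_left _ _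
      _ < R := by rw [hR]; linarith
  -- periodicity of φ
  obtain ⟨t₁, ht₁pos, ht₁T, hperφ⟩ := phi_periodic hH hper hT hφ hHJ hinit R hRpos
  obtain ⟨N, hN⟩ := exists_nat_one_div_lt ht₁pos
  have httsmall : ∀ n : ℕ, |tt (n + N)| < t₁ := by
    intro n
    have h1 := lt_of_lt_of_le (htlt (n + N)) (min_le_right _ _)
    have h2 : (1:ℝ) / (n + N + 1) ≤ 1 / (N + 1) := by
      apply one_div_le_one_div_of_le
      · positivity
      · push_cast; linarith
    calc |tt (n + N)| < 1 / (n + N + 1) := by exact_mod_cast h1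
      _ ≤ 1 / (N + 1) := h2
      _ < t₁ := hN
  -- criticality identities at the original points
  have hDx : ∀ n i, fderiv ℝ (Phi φ) (tt n, xx n, ξξ n) (0, Pi.single i 1, 0) = ξξ n i :=
    fun n i => ((crit_iff hφ (httIoo n)).1 (hcrit n)).2.1 i
  have hDξ : ∀ n i, fderiv ℝ (Phi φ) (tt n, xx n, ξξ n) (0, 0, Pi.single i 1) = xx n i :=
    fun n i => ((crit_iff hφ (httIoo n)).1 (hcrit n)).2.2 i
  -- transfer to the reduced points
  have hUvx : ∀ (n : ℕ) (i : Fin d),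
      Uv φ ((0:ℝ), Pi.single i 1, (0 : Fin d → ℝ)) (tt (n+N), xx (n+N), ξr (n+N))
        = ξr (n+N) i := by
    intro n i
    have htr := transfer_fderiv hφ hperφ (httIoo (n+N)) (httsmall n) (hxR (n+N))
      (ξr (n+N)) (γγ (n+N)) ((0:ℝ), Pi.single i 1, (0 : Fin d → ℝ))
    rw [← hsplit (n+N)] at htr
    have hsum : ∑ k, (Pi.single i 1 : Fin d → ℝ) k * (γγ (n+N) k : ℝ) = γγ (n+N) i := by
      simp [Pi.single_apply]
    rw [hDx (n+N) i] at htr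
    have := hsplit' (n+N) i
    show fderiv ℝ (Phi φ) (tt (n+N), xx (n+N), ξr (n+N)) ((0:ℝ), Pi.single i 1, 0) = ξr (n+N) i
    rw [hsum] at htr
    linarith [htr]
  have hUvξ : ∀ (n : ℕ) (i : Fin d),
      Uv φ ((0:ℝ), (0 : Fin d → ℝ), Pi.single i 1) (tt (n+N), xx (n+N), ξr (n+N))
        = xx (n+N) i := by
    intro n i
    have htr := transfer_fderiv hφ hperφ (httIoo (n+N)) (httsmall n) (hxR (n+N))
      (ξr (n+N)) (γγ (n+N)) ((0:ℝ), (0 : Fin d → ℝ), Pi.single i 1)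
    rw [← hsplit (n+N)] at htr
    rw [hDξ (n+N) i] at htr
    show fderiv ℝ (Phi φ) (tt (n+N), xx (n+N), ξr (n+N)) ((0:ℝ), 0, Pi.single i 1) = xx (n+N) i
    simpa using htr.symm
  -- compactness: extract a convergent subsequence of the reduced points
  obtain ⟨qb, hqbK, ι, hιmono, hqtend⟩ :=
    hcpt.tendsto_subseq (x := fun n => ((xx (n+N), ξr (n+N)) : PP d)) (fun n => hKmem (n+N))
  set tn : ℕ → ℝ := fun k => tt (ι k + N) with htn
  set xn : ℕ → Fin d → ℝ := fun k => xx (ι k + N) with hxn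
  set ξn : ℕ → Fin d → ℝ := fun k => ξr (ι k + N) with hξn
  have htn0 : ∀ k, tn k ≠ 0 := fun k => htne _
  have htnT : ∀ k, tn k ∈ Ioo (-T) T := fun k => httIoo _
  have htend : Filter.Tendsto tn Filter.atTop (nhds 0) := by
    refine squeeze_zero_norm (a := fun k : ℕ => 1 / (k + 1 : ℝ)) (fun k => ?_)
      tendsto_one_div_add_atTop_nhds_zero_nat
    have h1 := lt_of_lt_of_le (htlt (ι k + N)) (min_le_right _ _)
    have h2 : (1:ℝ) / (ι k + N + 1) ≤ 1 / (k + 1) := by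
      apply one_div_le_one_div_of_le
      · positivity
      · have : k ≤ ι k := hιmono.le_apply
        push_cast
        have : (k : ℝ) ≤ ι k := by exact_mod_cast this
        linarith
    calc ‖tn k‖ ≤ 1 / ((ι k : ℝ) + N + 1) := by
          rw [Real.norm_eq_abs]
          exact_mod_cast h1.le
      _ ≤ 1 / (k + 1) := by exact_mod_cast h2
  have hxend : Filter.Tendsto (fun k => ((xn k, ξn k) : PP d)) Filter.atTop
      (nhds ((qb.1, qb.2) : PP d)) := by
    have : ((qb.1, qb.2) : PP d) = qb := rfl
    rw [this]
    exact hqtend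
  -- rolle and limits
  have h1 : ∀ i, fderiv ℝ (Uv φ ((0:ℝ), Pi.single i 1, (0 : Fin d → ℝ)))
      ((0:ℝ), qb.1, qb.2) (1, 0, 0) = 0 := by
    intro i
    refine rolle_limit hT hφ _ htn0 htnT htend hxend fun k => ?_
    rw [hUvx (ι k) i]
    have := (init_fderiv hT hφ hinit (xn k) (ξn k)).1 i
    exact this.symm
  have h2 : ∀ i, fderiv ℝ (Uv φ ((0:ℝ), (0 : Fin d → ℝ), Pi.single i 1))
      ((0:ℝ), qb.1, qb.2) (1, 0, 0) = 0 := by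
    intro i
    refine rolle_limit hT hφ _ htn0 htnT htend hxend fun k => ?_
    rw [hUvξ (ι k) i]
    have := (init_fderiv hT hφ hinit (xn k) (ξn k)).2 i
    exact this.symm
  have hzero := final_contra hH hT hφ hHJ hinit h1 h2
  exact hU qb.1 qb.2 hqbK.1 hzero

end Stmt7Aux


/-- Under the Hamilton–Jacobi setup (`H` smooth, `2πℤ^d`-periodic in `ξ`; `U` a set of
non-critical values with `H⁻¹(U)` compact on `ℝ^d × T^d`; `φ` solving
`∂_t φ + H(x,∇_x φ) = 0`, `φ(0,x,ξ) = x·ξ` on `(−T,T)`), there is `t₀ > 0` such that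
for every `λ ∈ U` the critical points of `φ_λ` with `|t| < t₀` are exactly
`{(0,x,ξ) : H(x,ξ) = λ}`. -/
theorem stmt7 (d : ℕ) (H : (Fin d → ℝ) → (Fin d → ℝ) → ℝ)
    (hH : ContDiff ℝ (⊤ : ℕ∞) fun p : (Fin d → ℝ) × (Fin d → ℝ) => H p.1 p.2)
    (hper : ∀ x ξ (γ : Fin d → ℤ), H x (ξ + fun i => 2 * Real.pi * γ i) = H x ξ)
    (U : Set ℝ)
    (hU : ∀ x ξ, H x ξ ∈ U → fderiv ℝ (fun p : (Fin d → ℝ) × (Fin d → ℝ) => H p.1 p.2) (x, ξ) ≠ 0)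
    (hcpt : IsCompact {p : (Fin d → ℝ) × (Fin d → ℝ) |
        H p.1 p.2 ∈ U ∧ ∀ i, p.2 i ∈ Set.Icc 0 (2 * Real.pi)})
    (T : ℝ) (hT : 0 < T)
    (φ : ℝ → (Fin d → ℝ) → (Fin d → ℝ) → ℝ)
    (hφ : ContDiffOn ℝ (⊤ : ℕ∞) (fun p : ℝ × (Fin d → ℝ) × (Fin d → ℝ) => φ p.1 p.2.1 p.2.2)
      (Set.Ioo (-T) T ×ˢ Set.univ))
    (hHJ : ∀ t ∈ Set.Ioo (-T) T, ∀ x ξ,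
      deriv (fun s => φ s x ξ) t + H x (gradx (fun x' => φ t x' ξ) x) = 0)
    (hinit : ∀ x ξ, φ 0 x ξ = ∑ i, x i * ξ i) :
    ∃ t₀ > 0, ∀ lam ∈ U, ∀ (t : ℝ) (x ξ : Fin d → ℝ), |t| < t₀ →
      (IsCriticalPt φ lam t x ξ ↔ (t = 0 ∧ H x ξ = lam)) := by
  have hφ' : ContDiffOn ℝ (⊤ : ℕ∞) (Stmt7Aux.Phi φ) (Set.Ioo (-T) T ×ˢ Set.univ) := hφ
  obtain ⟨t₀, ht₀, ht₀T, hkey⟩ :=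
    Stmt7Aux.key hH hper hU hcpt hT hφ' hHJ hinit
  refine ⟨t₀, ht₀, fun lam hlam t x ξ ht => ?_⟩
  have htI : t ∈ Set.Ioo (-T) T := by
    have : |t| < T := lt_of_lt_of_le ht ht₀T
    exact ⟨by linarith [abs_lt.1 this |>.1], (abs_lt.1 this).2⟩
  constructor
  · intro hc
    by_cases h : t = 0
    · subst h
      exact ⟨rfl, Stmt7Aux.crit_ham hφ' hHJ htI hc⟩
    · exact absurd hc (hkey lam hlam t x ξ ht h)
  · rintro ⟨rfl, hl⟩
    exact Stmt7Aux.crit_at_zero hT hφ' hHJ hinit hl
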